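/- arXiv:1708.05274 — 7 statements merged into one kernel-verified Lean document; each statement's English description precedes it below -/
import Mathlib

section
/- Let D be a triangulated category admitting a bounded t-structure whose heart is a length category with finitely many isomorphism classes of simple objects. Then any two bounded t-structures on D are width-bounded with respect to each other. -/
/-!
Each of the finitely many generators of the heart of `t₀` has bounded amplitude for a bounded
t-structure `t'`, and objects of `t'`-amplitude in `[A, B]` are closed under extensions, so the
whole heart of `t₀` has `t'`-amplitude in a single interval `[A, B]`. A `t₀`-bounded object is an
iterated extension of its shifted `t₀`-cohomology objects, whence `D₀^{≥ a} ⊆ D'^{≥ A + a}` and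
`D₀^{≤ b} ⊆ D'^{≤ B + b}`; by orthogonality the first inclusion also gives
`D'^{≤ m} ⊆ D₀^{≤ m - A}`. Chaining these inclusions for `t₁` and `t₂` bounds each aisle by
shifts of the other.
-/

open CategoryTheory CategoryTheory.Limits CategoryTheory.Pretriangulated
open CategoryTheory.Triangulated

variable {C : Type*} [Category C] [Preadditive C] [HasZeroObject C] [HasShift C ℤ]
  [∀ n : ℤ, (shiftFunctor C n).Additive] [Pretriangulated C]

/-- A t-structure is bounded if every object lies in `D^{≥ m} ∩ D^{≤ n}` for some `m, n`. -/
def TBounded (t : TStructure C) : Prop :=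
  ∀ X : C, ∃ m n : ℤ, t.ge m X ∧ t.le n X

/-- The heart of a t-structure, as a predicate on objects. -/
def HeartSet (t : TStructure C) (X : C) : Prop :=
  t.le 0 X ∧ t.ge 0 X

/-- `t'` is width-bounded with respect to `t`: `D^{≤ m} ⊆ D'^{≤ 0} ⊆ D^{≤ n}`. -/
def WidthBounded (t' t : TStructure C) : Prop :=
  ∃ m n : ℤ, (∀ X : C, t.le m X → t'.le 0 X) ∧ (∀ X : C, t'.le 0 X → t.le n X)

namespace CategoryTheory.Triangulated.TStructure

variable (t t' : TStructure C)

/- Mathlib has these two facts as instances assuming `IsTriangulated C`; orthogonality alone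
suffices. -/
theorem isGE_truncLT_obj_of_isGE (X : C) (a b : ℤ) [hX : t.IsGE X a] :
    t.IsGE ((t.truncLT b).obj X) a := by
  by_cases hab : b < a
  · have := t.isGE_of_ge X b a
    exact t.isGE_of_isZero ((t.isGE_iff_isZero_truncLT_obj b X).1 inferInstance) a
  rw [t.isGE_iff_orthogonal (a - 1) a (by lia)]
  intro Y f hY
  obtain ⟨g, rfl⟩ := Triangle.coyoneda_exact₂ _
    (inv_rot_of_distTriang _ (t.triangleLTGE_distinguished b X)) f
    (t.zero_of_isLE_of_isGE _ (a - 1) a (by lia) hY hX)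
  rw [t.zero_of_isLE_of_isGE g (a - 1) (b + 1) (by lia) hY
    (t.isGE_shift ((t.truncGE b).obj X) b (-1) (b + 1))]
  exact zero_comp

theorem isLE_truncGE_obj_of_isLE (X : C) (a b : ℤ) [hX : t.IsLE X b] :
    t.IsLE ((t.truncGE a).obj X) b := by
  by_cases hab : b + 2 < a
  · have := t.isLE_of_le X b (a - 1)
    exact t.isLE_of_isZero
      ((t.isLE_iff_isZero_truncGE_obj (a - 1) a (by lia) X).1 inferInstance) b
  rw [t.isLE_iff_orthogonal b (b + 1) rfl]
  intro Y f hY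
  obtain ⟨g, rfl⟩ := Triangle.yoneda_exact₃ _ (t.triangleLTGE_distinguished a X) f
    (t.zero_of_isLE_of_isGE _ b (b + 1) (by lia) hX hY)
  rw [t.zero_of_isLE_of_isGE g (a - 2) (b + 1) (by lia)
    (t.isLE_shift ((t.truncLT a).obj X) (a - 1) 1 (a - 2)) hY]
  exact comp_zero

theorem prop_of_isGE_of_isLE (P : C → Prop) (hzero : ∀ X : C, IsZero X → P X)
    (hext : ∀ T ∈ distTriang C, P T.obj₁ → P T.obj₃ → P T.obj₂) (a b : ℤ)
    (hpure : ∀ n, a ≤ n → n ≤ b → ∀ X : C, t.IsLE X n → t.IsGE X n → P X)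
    (X : C) (hXa : t.IsGE X a) (hXb : t.IsLE X b) : P X := by
  obtain ⟨k, hk⟩ : ∃ k : ℕ, b < a + k := ⟨(b - a + 1).toNat, by lia⟩
  induction k generalizing a X with
  | zero => exact hzero X (t.isZero X b a)
  | succ k ih =>
    by_cases hab : b < a
    · exact hzero X (t.isZero X b a)
    -- truncating at `a + 1` splits off the lowest cohomology object of `X`
    refine hext _ (t.triangleLTGE_distinguished (a + 1) X) ?_ ?_
    · exact hpure a le_rfl (by lia) ((t.truncLT (a + 1)).obj X) inferInstance
        (t.isGE_truncLT_obj_of_isGE X a _)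
    · exact ih (a + 1) (fun n h₁ h₂ ↦ hpure n (by lia) h₂) ((t.truncGE (a + 1)).obj X)
        inferInstance (t.isLE_truncGE_obj_of_isLE X _ b) (by lia)

section HeartBounds

variable {t t'} {A B : ℤ} (hheart : ∀ X : C, HeartSet t X → t'.IsGE X A ∧ t'.IsLE X B)
include hheart

theorem isGE_add_and_isLE_add_of_isLE_of_isGE (n : ℤ) (X : C) (hn : t.IsLE X n)
    (hn' : t.IsGE X n) : t'.IsGE X (A + n) ∧ t'.IsLE X (B + n) := by
  obtain ⟨hA, hB⟩ := hheart (X⟦n⟧)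
    ⟨(t.isLE_shift X n n 0).le, (t.isGE_shift X n n 0).ge⟩
  exact ⟨(t'.isGE_shift_iff X (A + n) n A).1 hA, (t'.isLE_shift_iff X (B + n) n B).1 hB⟩

theorem isGE_add_of_isGE (ht : TBounded t) (a : ℤ) (X : C) (hX : t.IsGE X a) :
    t'.IsGE X (A + a) := by
  obtain ⟨-, b, -, hb⟩ := ht X
  refine t.prop_of_isGE_of_isLE (fun Y ↦ t'.IsGE Y (A + a)) (fun Y hY ↦ t'.isGE_of_isZero hY _)
    (fun T hT h₁ h₃ ↦ t'.isGE₂ T hT _ h₁ h₃) a b (fun n ha _ Y h₁ h₂ ↦ ?_) X hX ⟨hb⟩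
  have := (isGE_add_and_isLE_add_of_isLE_of_isGE hheart n Y h₁ h₂).1
  exact t'.isGE_of_ge Y (A + a) (A + n)

theorem isLE_add_of_isLE (ht : TBounded t) (b : ℤ) (X : C) (hX : t.IsLE X b) :
    t'.IsLE X (B + b) := by
  obtain ⟨a, -, ha, -⟩ := ht X
  refine t.prop_of_isGE_of_isLE (fun Y ↦ t'.IsLE Y (B + b)) (fun Y hY ↦ t'.isLE_of_isZero hY _)
    (fun T hT h₁ h₃ ↦ t'.isLE₂ T hT _ h₁ h₃) a b (fun n _ hb Y h₁ h₂ ↦ ?_) X ⟨ha⟩ hX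
  have := (isGE_add_and_isLE_add_of_isLE_of_isGE hheart n Y h₁ h₂).2
  exact t'.isLE_of_le Y (B + n) (B + b)

end HeartBounds

theorem isLE_sub_of_isLE {A : ℤ} (h : ∀ (a : ℤ) (X : C), t.IsGE X a → t'.IsGE X (A + a))
    (m : ℤ) (X : C) (hX : t'.IsLE X m) : t.IsLE X (m - A) := by
  rw [t.isLE_iff_orthogonal (m - A) (m - A + 1) rfl]
  intro Y f hY
  exact t'.zero_of_isLE_of_isGE f m (A + (m - A + 1)) (by lia) hX (h _ Y hY)

theorem exists_heart_isGE_isLE (ht' : TBounded t') {ι : Type*} [Finite ι] (S : ι → C)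
    (hgen : ∀ P : C → Prop,
      (∀ i, P (S i)) →
      (∀ X : C, IsZero X → P X) →
      (∀ X Y : C, (X ≅ Y) → P X → P Y) →
      (∀ T : Triangle C, (T ∈ distTriang C) → P T.obj₁ → P T.obj₃ → P T.obj₂) →
      ∀ X : C, HeartSet t X → P X) :
    ∃ A B : ℤ, ∀ X : C, HeartSet t X → t'.IsGE X A ∧ t'.IsLE X B := by
  choose a b ha hb using fun i ↦ ht' (S i)
  obtain ⟨A, hA⟩ := (Set.finite_range a).bddBelow
  obtain ⟨B, hB⟩ := (Set.finite_range b).bddAbove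
  refine ⟨A, B, hgen _ (fun i ↦ ⟨?_, ?_⟩)
    (fun X hX ↦ ⟨t'.isGE_of_isZero hX A, t'.isLE_of_isZero hX B⟩)
    (fun X Y e ⟨_, _⟩ ↦ ⟨t'.isGE_of_iso e A, t'.isLE_of_iso e B⟩)
    (fun T hT h₁ h₃ ↦ ⟨t'.isGE₂ T hT A h₁.1 h₃.1, t'.isLE₂ T hT B h₁.2 h₃.2⟩)⟩
  · exact ⟨t'.ge_antitone (hA (Set.mem_range_self i)) _ (ha i)⟩
  · exact ⟨t'.le_monotone (hB (Set.mem_range_self i)) _ (hb i)⟩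

theorem widthBounded_of_heart_isGE_isLE (t₁ t₂ : TStructure C) (ht : TBounded t)
    {A₁ B₁ A₂ B₂ : ℤ} (h₁ : ∀ X : C, HeartSet t X → t₁.IsGE X A₁ ∧ t₁.IsLE X B₁)
    (h₂ : ∀ X : C, HeartSet t X → t₂.IsGE X A₂ ∧ t₂.IsLE X B₂) :
    WidthBounded t₁ t₂ := by
  refine ⟨A₂ - B₁, B₂ - A₁, fun X hX ↦ ?_, fun X hX ↦ ?_⟩
  · have h := isLE_add_of_isLE h₁ ht _ X
      (isLE_sub_of_isLE t t₂ (isGE_add_of_isGE h₂ ht) _ X ⟨hX⟩)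
    rw [show B₁ + (A₂ - B₁ - A₂) = 0 by ring] at h
    exact h.le
  · have h := isLE_add_of_isLE h₂ ht _ X
      (isLE_sub_of_isLE t t₁ (isGE_add_of_isGE h₁ ht) _ X ⟨hX⟩)
    rw [show B₂ + (0 - A₁) = B₂ - A₁ by ring] at h
    exact h.le

end CategoryTheory.Triangulated.TStructure

theorem widthBounded_of_length_heart_finitely_many_simples_general
    (t₀ : TStructure C) (ht₀ : TBounded t₀)
    (N : ℕ) (S : Fin N → C)
    (hgen : ∀ P : C → Prop,
      (∀ i, P (S i)) →
      (∀ X : C, IsZero X → P X) →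
      (∀ X Y : C, (X ≅ Y) → P X → P Y) →
      (∀ T : Triangle C, (T ∈ distTriang C) → P T.obj₁ → P T.obj₃ → P T.obj₂) →
      ∀ X : C, HeartSet t₀ X → P X)
    (t₁ t₂ : TStructure C) (h₁ : TBounded t₁) (h₂ : TBounded t₂) :
    WidthBounded t₁ t₂ := by
  obtain ⟨A₁, B₁, hheart₁⟩ := t₀.exists_heart_isGE_isLE t₁ h₁ S hgen
  obtain ⟨A₂, B₂, hheart₂⟩ := t₀.exists_heart_isGE_isLE t₂ h₂ S hgen
  exact t₀.widthBounded_of_heart_isGE_isLE t₁ t₂ ht₀ hheart₁ hheart₂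

/-- If `D` admits a bounded t-structure `t₀` whose heart is a length category with finitely
many isomorphism classes of simple objects (expressed by the fact that every heart object lies
in the smallest class containing the finitely many simple objects `S i`, the zero objects, and
closed under isomorphism and extension), then any two bounded t-structures on `D` are
width-bounded with respect to each other. -/
theorem widthBounded_of_length_heart_finitely_many_simples
    (t₀ : TStructure C) (ht₀ : TBounded t₀)
    (N : ℕ) (S : Fin N → C) (hS : ∀ i, HeartSet t₀ (S i))
    (hgen : ∀ P : C → Prop,
      (∀ i, P (S i)) →
      (∀ X : C, IsZero X → P X) →
      (∀ X Y : C, (X ≅ Y) → P X → P Y) →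
      (∀ T : Triangle C, (T ∈ distTriang C) → P T.obj₁ → P T.obj₃ → P T.obj₂) →
      ∀ X : C, HeartSet t₀ X → P X)
    (t₁ t₂ : TStructure C) (h₁ : TBounded t₁) (h₂ : TBounded t₂) :
    WidthBounded t₁ t₂ :=
  widthBounded_of_length_heart_finitely_many_simples_general t₀ ht₀ N S hgen t₁ t₂ h₁ h₂
end

section
/- Let T be a triangulated category and A → B → C → A[1] a distinguished triangle with Hom(A, C[-1]) = 0. If A = A₁ ⊕ A₂ and the component A₁ → B of the first map is zero, then A₁ = 0. Dually, if C = C₁ ⊕ C₂ and the component B → C₁ of the second map is zero, then C₁ = 0. -/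
open CategoryTheory CategoryTheory.Limits CategoryTheory.Pretriangulated

/-!
If a summand `i : A₁ ⟶ A` of `A` is killed by `A ⟶ B`, exactness of
`C[-1] ⟶ A ⟶ B` factors `i` through `C[-1]`; but `A₁` is a retract of `A` and
`Hom(A, C[-1]) = 0`, so the factoring map vanishes, hence `i = 0` and `A₁ = 0`.
The dual statement uses exactness of `B ⟶ C ⟶ A[1]` together with
`Hom(A[1], C) ≅ Hom(A, C[-1]) = 0`.
-/

namespace CategoryTheory

section

variable {C : Type*} [Category C] [HasZeroMorphisms C]

lemma isZero_of_isSplitMono_of_eq_comp {X Y Z : C} (i : X ⟶ Y) [IsSplitMono i] (g : X ⟶ Z)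
    (m : Z ⟶ Y) (hi : i = g ≫ m) (hZ : ∀ f : Y ⟶ Z, f = 0) : IsZero X := by
  have hg : g = 0 := by
    rw [← Category.id_comp g, ← IsSplitMono.id i, Category.assoc, hZ (retraction i ≫ g),
      comp_zero]
  exact IsZero.of_mono_eq_zero i (by rw [hi, hg, zero_comp])

lemma isZero_of_isSplitEpi_of_eq_comp {X Y Z : C} (p : Y ⟶ X) [IsSplitEpi p] (m : Y ⟶ Z)
    (q : Z ⟶ X) (hp : p = m ≫ q) (hZ : ∀ f : Z ⟶ Y, f = 0) : IsZero X := by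
  have hq : q = 0 := by
    rw [← Category.comp_id q, ← IsSplitEpi.id p, ← Category.assoc, hZ (q ≫ section_ p),
      zero_comp]
  exact IsZero.of_epi_eq_zero p (by rw [hp, hq, comp_zero])

lemma shift_hom_eq_zero_of_forall_eq_zero [HasShift C ℤ] {A X : C} (n : ℤ)
    (h : ∀ f : A ⟶ X⟦-n⟧, f = 0) (g : A⟦n⟧ ⟶ X) : g = 0 := by
  have hg := h ((shiftFunctorCompIsoId C n (-n) (add_neg_cancel n)).inv.app A ≫ g⟦-n⟧')
  exact (shiftFunctor C (-n)).map_eq_zero_iff.1 ((cancel_epi _).1 (hg.trans comp_zero.symm))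

end

namespace Pretriangulated

variable {C : Type*} [Category C] [Preadditive C] [HasZeroObject C] [HasShift C ℤ]
  [∀ n : ℤ, (shiftFunctor C n).Additive] [Pretriangulated C]

lemma isZero_of_isSplitMono_of_comp_mor₁_eq_zero (T : Triangle C) (hT : T ∈ distTriang C)
    (h : ∀ f : T.obj₁ ⟶ T.obj₃⟦(-1 : ℤ)⟧, f = 0) {X : C} (i : X ⟶ T.obj₁) [IsSplitMono i]
    (hi : i ≫ T.mor₁ = 0) : IsZero X := by
  obtain ⟨g, hg⟩ := Triangle.coyoneda_exact₂ _ (inv_rot_of_distTriang _ hT) i hi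
  exact isZero_of_isSplitMono_of_eq_comp i g _ hg h

lemma isZero_of_isSplitEpi_of_mor₂_comp_eq_zero (T : Triangle C) (hT : T ∈ distTriang C)
    (h : ∀ f : T.obj₁⟦(1 : ℤ)⟧ ⟶ T.obj₃, f = 0) {Y : C} (p : T.obj₃ ⟶ Y) [IsSplitEpi p]
    (hp : T.mor₂ ≫ p = 0) : IsZero Y := by
  obtain ⟨q, hq⟩ := Triangle.yoneda_exact₃ T hT p hp
  exact isZero_of_isSplitEpi_of_eq_comp p _ q hq h

end Pretriangulated

end CategoryTheory

variable {C : Type*} [Category C] [Preadditive C] [HasZeroObject C] [HasShift C ℤ]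
  [∀ n : ℤ, (shiftFunctor C n).Additive] [Pretriangulated C] [HasBinaryBiproducts C]

/-- Let `A → B → C → A[1]` be a distinguished triangle with `Hom(A, C[-1]) = 0`.
If `A = A₁ ⊕ A₂` and the component `A₁ → B` of the first map is zero, then `A₁ = 0`;
dually, if `C = C₁ ⊕ C₂` and the component `B → C₁` of the second map is zero,
then `C₁ = 0`. -/
theorem isZero_summand_of_component_zero
    (T : Triangle C) (hT : T ∈ distTriang C)
    (h : ∀ f : T.obj₁ ⟶ (T.obj₃)⟦(-1 : ℤ)⟧, f = 0) :
    (∀ (A₁ A₂ : C) (e : A₁ ⊞ A₂ ≅ T.obj₁),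
        biprod.inl ≫ e.hom ≫ T.mor₁ = 0 → IsZero A₁) ∧
    (∀ (C₁ C₂ : C) (e : T.obj₃ ≅ C₁ ⊞ C₂),
        T.mor₂ ≫ e.hom ≫ biprod.fst = 0 → IsZero C₁) := by
  refine ⟨fun A₁ A₂ e he => ?_, fun C₁ C₂ e he => ?_⟩
  · exact isZero_of_isSplitMono_of_comp_mor₁_eq_zero T hT h (biprod.inl ≫ e.hom)
      ((Category.assoc _ _ _).trans he)
  · exact isZero_of_isSplitEpi_of_mor₂_comp_eq_zero T hT
      (shift_hom_eq_zero_of_forall_eq_zero 1 h) (e.hom ≫ biprod.fst) he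
end

section
/- Let D be a Hom-finite k-linear triangulated category with Serre functor S, and let C be an admissible triangulated subcategory with inclusion i_* : C → D having left adjoint i^* and right adjoint i^!. Then i^! ∘ S ∘ i_* is a Serre functor of C, with quasi-inverse i^* ∘ S^{-1} ∘ i_*. -/
open CategoryTheory CategoryTheory.Limits CategoryTheory.Pretriangulated

universe v u

variable (k : Type*) [Field k]

/-- A Serre functor on a Hom-finite `k`-linear (triangulated) category: an (exact)
autoequivalence `E` together with functorial isomorphisms
`Hom(X, Y) ≅ (Hom(Y, E X))ᵛ`. -/
structure SerreFunctorData (C : Type u) [Category.{v} C] [Preadditive C] [Linear k C] where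
  /-- the underlying autoequivalence -/
  E : C ≌ C
  /-- the Serre duality pairing `Hom(X, Y) ≅ D Hom(Y, S X)` -/
  pairing : ∀ X Y : C, (X ⟶ Y) ≃ₗ[k] Module.Dual k (Y ⟶ E.functor.obj X)
  /-- naturality of the pairing in the second variable -/
  naturality_right : ∀ {X Y Y' : C} (g : X ⟶ Y) (u : Y ⟶ Y') (h : Y' ⟶ E.functor.obj X),
    pairing X Y' (g ≫ u) h = pairing X Y g (u ≫ h)
  /-- naturality of the pairing in the first variable -/
  naturality_left : ∀ {X X' Y : C} (v : X' ⟶ X) (g : X ⟶ Y) (h : Y ⟶ E.functor.obj X'),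
    pairing X' Y (v ≫ g) h = pairing X Y g (h ≫ E.functor.map v)

variable {C : Type u} [Category.{v} C] [Preadditive C] [Linear k C]
  [HasZeroObject C] [HasShift C ℤ] [∀ n : ℤ, (shiftFunctor C n).Additive] [Pretriangulated C]
  [∀ X Y : C, FiniteDimensional k (X ⟶ Y)]

/-! The Serre pairing of `D` transports along `i_* ⊣ i^!` to natural isomorphisms
`Hom(X, Y) ≅ D Hom(Y, i^! S i_* X)` on `C`, and, after dualising (Hom-finiteness), along
`i^* ⊣ i_*` to `Hom(X, Y) ≅ D Hom(i^* S⁻¹ i_* Y, X)`. A functor admitting a natural pairing of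
either kind is fully faithful: nondegeneracy of the pairing separates morphisms. Composing the
three adjunctions gives `i^* S⁻¹ i_* ⊣ i^! S i_*`, and an adjunction between fully faithful
functors is an equivalence. -/

section LinearAlgebra

variable {k} {V W : Type*} [AddCommGroup V] [Module k V] [AddCommGroup W] [Module k W]

theorem Module.Dual.eq_of_forall_equiv_apply_eq (p : V ≃ₗ[k] Module.Dual k W) {w w' : W}
    (h : ∀ v, p v w = p v w') : w = w' :=
  Module.eval_apply_injective k <| LinearMap.ext fun φ => by
    simpa using h (p.symm φ)

end LinearAlgebra

namespace CategoryTheory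

section LinearFunctors

variable {A B : Type*} [Category A] [Category B] [Preadditive A] [Preadditive B] [Linear k A]
  [Linear k B] {F : A ⥤ B} {G : B ⥤ A}

theorem Adjunction.left_adjoint_linear (adj : F ⊣ G) [G.Additive] [G.Linear k] : F.Linear k where
  map_smul {X Y} f r := (adj.homEquiv _ _).injective (by simp [Adjunction.homEquiv_unit])

def Adjunction.homLinearEquiv (adj : F ⊣ G) [F.Additive] [F.Linear k] (X : A) (Y : B) :
    (F.obj X ⟶ Y) ≃ₗ[k] (X ⟶ G.obj Y) :=
  ((adj.homAddEquiv X Y).symm.toLinearEquiv fun r f => by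
    simp [Adjunction.homEquiv_counit]).symm

end LinearFunctors

section Pairings

variable {A : Type*} [Category A] [Preadditive A] [Linear k A]

structure SerrePairing (F : A ⥤ A) where
  pairing : ∀ X Y : A, (X ⟶ Y) ≃ₗ[k] Module.Dual k (Y ⟶ F.obj X)
  naturality_right : ∀ {X Y Y' : A} (g : X ⟶ Y) (u : Y ⟶ Y') (h : Y' ⟶ F.obj X),
    pairing X Y' (g ≫ u) h = pairing X Y g (u ≫ h)
  naturality_left : ∀ {X X' Y : A} (v : X' ⟶ X) (g : X ⟶ Y) (h : Y ⟶ F.obj X'),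
    pairing X' Y (v ≫ g) h = pairing X Y g (h ≫ F.map v)

-- A `SerrePairing` for `G.op`, written out in `A`.
structure CoSerrePairing (G : A ⥤ A) where
  pairing : ∀ X Y : A, (X ⟶ Y) ≃ₗ[k] Module.Dual k (G.obj Y ⟶ X)
  naturality_left : ∀ {X X' Y : A} (v : X' ⟶ X) (g : X ⟶ Y) (h : G.obj Y ⟶ X'),
    pairing X' Y (v ≫ g) h = pairing X Y g (h ≫ v)
  naturality_right : ∀ {X Y Y' : A} (g : X ⟶ Y) (u : Y ⟶ Y') (h : G.obj Y' ⟶ X),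
    pairing X Y' (g ≫ u) h = pairing X Y g (G.map u ≫ h)

variable {k}

namespace SerrePairing

variable {F : A ⥤ A} (S : SerrePairing k F)

theorem pairing_eq_pairing_id {X Y : A} (g : X ⟶ Y) (h : Y ⟶ F.obj X) :
    S.pairing X Y g h = S.pairing Y Y (𝟙 Y) (h ≫ F.map g) := by
  simpa using S.naturality_left g (𝟙 Y) h

theorem hom_ext {Y B : A} {w w' : B ⟶ F.obj Y}
    (h : ∀ v : Y ⟶ B, S.pairing Y Y (𝟙 Y) (v ≫ w) = S.pairing Y Y (𝟙 Y) (v ≫ w')) : w = w' :=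
  Module.Dual.eq_of_forall_equiv_apply_eq (S.pairing Y B) fun v => by
    simpa [← S.naturality_right] using h v

include S in
theorem faithful : F.Faithful where
  map_injective {X Y} g g' hg := (S.pairing X Y).injective <| LinearMap.ext fun h => by
    rw [S.pairing_eq_pairing_id, hg, ← S.pairing_eq_pairing_id]

include S in
theorem full : F.Full where
  map_surjective {X Y} t := by
    refine ⟨(S.pairing X Y).symm ((S.pairing Y Y (𝟙 Y)).comp (Linear.rightComp k Y t)), ?_⟩
    refine S.hom_ext fun v => ?_
    rw [← S.pairing_eq_pairing_id, LinearEquiv.apply_symm_apply]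
    rfl

end SerrePairing

namespace CoSerrePairing

variable {G : A ⥤ A} (T : CoSerrePairing k G)

theorem pairing_eq_pairing_id {X Y : A} (g : X ⟶ Y) (h : G.obj Y ⟶ X) :
    T.pairing X Y g h = T.pairing X X (𝟙 X) (G.map g ≫ h) := by
  simpa using T.naturality_right (𝟙 X) g h

theorem hom_ext {X B : A} {w w' : G.obj X ⟶ B}
    (h : ∀ v : B ⟶ X, T.pairing X X (𝟙 X) (w ≫ v) = T.pairing X X (𝟙 X) (w' ≫ v)) : w = w' :=
  Module.Dual.eq_of_forall_equiv_apply_eq (T.pairing B X) fun v => by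
    simpa [← T.naturality_left] using h v

include T in
theorem faithful : G.Faithful where
  map_injective {X Y} g g' hg := (T.pairing X Y).injective <| LinearMap.ext fun h => by
    rw [T.pairing_eq_pairing_id, hg, ← T.pairing_eq_pairing_id]

include T in
theorem full : G.Full where
  map_surjective {X Y} t := by
    refine ⟨(T.pairing X Y).symm ((T.pairing X X (𝟙 X)).comp (Linear.leftComp k X t)), ?_⟩
    refine T.hom_ext fun v => ?_
    rw [← T.pairing_eq_pairing_id, LinearEquiv.apply_symm_apply]
    rfl

end CoSerrePairing

noncomputable def SerrePairing.coSerrePairingInverse [∀ X Y : A, FiniteDimensional k (X ⟶ Y)]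
    {E : A ≌ A} (S : SerrePairing k E.functor) : CoSerrePairing k E.inverse where
  pairing X Y := ((S.pairing (E.inverse.obj Y) X).trans
    (Linear.homCongr k (Iso.refl X) (E.counitIso.app Y)).symm.dualMap).flip
  naturality_left v g h := by
    simp [Linear.homCongr, S.naturality_right]
  naturality_right g u h := by
    simp [Linear.homCongr, S.naturality_left]

end Pairings

section Restriction

variable {k} {A B : Type*} [Category A] [Category B] [Preadditive A] [Preadditive B] [Linear k A]
  [Linear k B] {ι : A ⥤ B} [ι.Additive] [ι.Linear k] (hι : ι.FullyFaithful)

noncomputable def SerrePairing.restrict {F : B ⥤ B} (S : SerrePairing k F) {R : B ⥤ A}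
    (adj : ι ⊣ R) : SerrePairing k (ι ⋙ F ⋙ R) where
  pairing X Y :=
    (hι.homEquiv.toLinearEquiv ⟨fun _ _ => ι.map_add, fun _ _ => ι.map_smul _ _⟩).trans
      ((S.pairing _ _).trans (adj.homLinearEquiv k Y _).symm.dualMap)
  naturality_right g u h := by
    change S.pairing _ _ (ι.map (g ≫ u)) (ι.map h ≫ adj.counit.app _) =
      S.pairing _ _ (ι.map g) (ι.map (u ≫ h) ≫ adj.counit.app _)
    rw [ι.map_comp, S.naturality_right, ι.map_comp, Category.assoc]
  naturality_left v g h := by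
    change S.pairing _ _ (ι.map (v ≫ g)) (ι.map h ≫ adj.counit.app _) =
      S.pairing _ _ (ι.map g) (ι.map (h ≫ R.map (F.map (ι.map v))) ≫ adj.counit.app _)
    simp only [Functor.map_comp, S.naturality_left, Category.assoc, Adjunction.counit_naturality]

noncomputable def CoSerrePairing.restrict {G : B ⥤ B} (T : CoSerrePairing k G) {L : B ⥤ A}
    (adj : L ⊣ ι) [L.Additive] [L.Linear k] : CoSerrePairing k (ι ⋙ G ⋙ L) where
  pairing X Y :=
    (hι.homEquiv.toLinearEquiv ⟨fun _ _ => ι.map_add, fun _ _ => ι.map_smul _ _⟩).trans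
      ((T.pairing _ _).trans (adj.homLinearEquiv k _ X).dualMap)
  naturality_left v g h := by
    change T.pairing _ _ (ι.map (v ≫ g)) (adj.unit.app _ ≫ ι.map h) =
      T.pairing _ _ (ι.map g) (adj.unit.app _ ≫ ι.map (h ≫ v))
    rw [ι.map_comp, T.naturality_left, ι.map_comp, Category.assoc]
  naturality_right g u h := by
    change T.pairing _ _ (ι.map (g ≫ u)) (adj.unit.app _ ≫ ι.map h) =
      T.pairing _ _ (ι.map g) (adj.unit.app _ ≫ ι.map (L.map (G.map (ι.map u)) ≫ h))
    rw [ι.map_comp, T.naturality_right, ι.map_comp, adj.unit_naturality_assoc]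

end Restriction

end CategoryTheory

section

variable {k} {A : Type*} [Category A] [Preadditive A] [Linear k A]

def SerreFunctorData.toSerrePairing (σ : SerreFunctorData k A) : SerrePairing k σ.E.functor :=
  ⟨σ.pairing, σ.naturality_right, σ.naturality_left⟩

def SerreFunctorData.ofSerrePairing (E : A ≌ A) (S : SerrePairing k E.functor) :
    SerreFunctorData k A :=
  ⟨E, S.pairing, S.naturality_right, S.naturality_left⟩

end

theorem serreFunctor_of_admissible
    (σ : SerreFunctorData k C) (P : C → Prop)
    -- admissibility: a left adjoint `L = i^*` and a right adjoint `R = i^!` of the inclusion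
    (L R : C ⥤ ObjectProperty.FullSubcategory P)
    (adjL : L ⊣ ObjectProperty.ι P)
    (adjR : ObjectProperty.ι P ⊣ R) :
    ∃ σ' : SerreFunctorData k (ObjectProperty.FullSubcategory P),
      Nonempty (σ'.E.functor ≅ ObjectProperty.ι P ⋙ σ.E.functor ⋙ R) ∧
      Nonempty (σ'.E.inverse ≅ ObjectProperty.ι P ⋙ σ.E.inverse ⋙ L) := by
  have := adjL.left_adjoint_additive
  have := adjL.left_adjoint_linear k
  let S := σ.toSerrePairing.restrict (ObjectProperty.fullyFaithfulι P) adjR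
  let T := σ.toSerrePairing.coSerrePairingInverse.restrict (ObjectProperty.fullyFaithfulι P) adjL
  have := S.full
  have := S.faithful
  have := T.full
  have := T.faithful
  let adj : ObjectProperty.ι P ⋙ σ.E.inverse ⋙ L ⊣ ObjectProperty.ι P ⋙ σ.E.functor ⋙ R :=
    (adjR.comp σ.E.symm.toAdjunction).comp adjL
  exact ⟨.ofSerrePairing adj.toEquivalence.symm S, ⟨Iso.refl _⟩, ⟨Iso.refl _⟩⟩
end

section
/- Let D be a Hom-finite k-linear triangulated category with a Serre functor, and C an admissible subcategory. Then both the right orthogonal C^⊥ = {X : Hom(C, X[n]) = 0 for all n} and the left orthogonal ^⊥C are admissible subcategories of D. -/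
open CategoryTheory CategoryTheory.Limits CategoryTheory.Pretriangulated

universe v u

variable (k : Type*) [Field k]

variable {C : Type u} [Category.{v} C] [Preadditive C] [Linear k C]
  [HasZeroObject C] [HasShift C ℤ] [∀ n : ℤ, (shiftFunctor C n).Additive] [Pretriangulated C]
  [∀ X Y : C, FiniteDimensional k (X ⟶ Y)]

/-- The right orthogonal `P^⊥ = {X | Hom(Z, X[n]) = 0 for all Z ∈ P, n ∈ ℤ}`. -/
def RightOrthogonal (P : C → Prop) (X : C) : Prop :=
  ∀ Z : C, P Z → ∀ (n : ℤ) (f : Z ⟶ X⟦n⟧), f = 0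

/-- The left orthogonal `^⊥P = {X | Hom(X, Z[n]) = 0 for all Z ∈ P, n ∈ ℤ}`. -/
def LeftOrthogonal (P : C → Prop) (X : C) : Prop :=
  ∀ Z : C, P Z → ∀ (n : ℤ) (f : X ⟶ Z⟦n⟧), f = 0

/-!
If `ι_P` has a right adjoint, every `X` has a `P`-coreflection `A → X`. Complete it to a
distinguished triangle `A → X → Y → A[1]`. The long exact `Hom(W, -)`-sequences for `W ∈ P`
show `Y ∈ P^⊥`, and the `Hom(-, Z)`-sequences for `Z ∈ P^⊥` (where `Hom(A[n], Z) = 0`) show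
that `X → Y` is a `P^⊥`-reflection. Dually, a left adjoint of `ι_P` gives a right adjoint of
the inclusion of `^⊥P`.

The two remaining adjoints come from Serre duality `Hom(W, S N) ≅ Hom(N, W)^*`. A
`P`-reflection `S⁻¹X → B` becomes a map `X → S B` inducing bijections
`Hom(W, X) ≅ Hom(W, S B)` for `W ∈ P`, while `Hom(Z, (S B)[n]) ≅ Hom(B, Z[-n])^* = 0` for
`Z ∈ P^⊥`; so the same triangle argument makes the fibre `Y → X` of this map the
`P^⊥`-coreflection of `X`. Symmetrically, a `P`-coreflection of `S X` yields the
`^⊥P`-reflection of `X`.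
-/

section Reflections

variable {D : Type*} [Category D] (Q : ObjectProperty D)

def IsReflection {X Y : D} (η : X ⟶ Y) : Prop :=
  Q Y ∧ ∀ Z, Q Z → Function.Bijective fun h : Y ⟶ Z => η ≫ h

def IsCoreflection {X Y : D} (ε : Y ⟶ X) : Prop :=
  Q Y ∧ ∀ Z, Q Z → Function.Bijective fun h : Z ⟶ Y => h ≫ ε

lemma isRightAdjoint_ι_iff :
    Q.ι.IsRightAdjoint ↔ ∀ X : D, ∃ (Y : D) (η : X ⟶ Y), IsReflection Q η := by
  constructor
  · intro _
    let adj := Adjunction.ofIsRightAdjoint Q.ι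
    refine fun X => ⟨_, adj.unit.app X, (Q.ι.leftAdjoint.obj X).property, fun Z hZ => ?_⟩
    have key (h : _ ⟶ Z) :
        adj.unit.app X ≫ h = adj.homEquiv X ⟨Z, hZ⟩ (ObjectProperty.homMk h) := by
      rw [Adjunction.homEquiv_unit]
      rfl
    simp only [key]
    exact (adj.homEquiv _ _).bijective.comp InducedCategory.homEquiv.symm.bijective
  · intro h
    choose Y η hη using h
    let e X (Z : Q.FullSubcategory) : (⟨Y X, (hη X).1⟩ ⟶ Z) ≃ (X ⟶ Z.obj) :=
      Equiv.ofBijective (fun h => η X ≫ h.hom)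
        (((hη X).2 Z.obj Z.property).comp InducedCategory.homEquiv.bijective)
    exact ⟨_, ⟨Adjunction.adjunctionOfEquivLeft e fun X Z Z' g h => by simp [e]⟩⟩

lemma isLeftAdjoint_ι_iff :
    Q.ι.IsLeftAdjoint ↔ ∀ X : D, ∃ (Y : D) (ε : Y ⟶ X), IsCoreflection Q ε := by
  constructor
  · intro _
    let adj := Adjunction.ofIsLeftAdjoint Q.ι
    refine fun X => ⟨_, adj.counit.app X, (Q.ι.rightAdjoint.obj X).property, fun Z hZ => ?_⟩
    have key (h : Z ⟶ _) :
        h ≫ adj.counit.app X = (adj.homEquiv ⟨Z, hZ⟩ X).symm (ObjectProperty.homMk h) := by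
      rw [Adjunction.homEquiv_counit]
      rfl
    simp only [key]
    exact (adj.homEquiv _ _).symm.bijective.comp InducedCategory.homEquiv.symm.bijective
  · intro h
    choose Y ε hε using h
    let e (Z : Q.FullSubcategory) X : (Z ⟶ ⟨Y X, (hε X).1⟩) ≃ (Z.obj ⟶ X) :=
      Equiv.ofBijective (fun h => h.hom ≫ ε X)
        (((hε X).2 Z.obj Z.property).comp InducedCategory.homEquiv.bijective)
    refine ⟨_, ⟨Adjunction.adjunctionOfEquivRight (fun Z X => (e Z X).symm)
      fun Z Z' X f g => ?_⟩⟩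
    apply (e Z X).injective
    rw [Equiv.apply_symm_apply]
    change _ = (f ≫ (e Z' X).symm g).hom ≫ ε X
    rw [ObjectProperty.FullSubcategory.comp_hom, Category.assoc]
    exact congrArg (f.hom ≫ ·) ((e Z' X).apply_symm_apply g).symm

lemma bijective_comp_iso_comp_iff {X Y Z : D} (e : X ≅ Y) (f : Y ⟶ Z) (W : D) :
    (Function.Bijective fun g : W ⟶ X => g ≫ e.hom ≫ f) ↔
      Function.Bijective fun g : W ⟶ Y => g ≫ f := by
  rw [← Equiv.bijective_comp e.homToEquiv]
  simp only [Function.comp_def, Iso.homToEquiv_apply, Category.assoc]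

end Reflections

section ZeroHom

variable {D : Type*} [Category D] [HasZeroMorphisms D]

lemma forall_hom_eq_zero_congr {A B A' B' : D} (e : (A ⟶ B) ≃ (A' ⟶ B')) :
    (∀ f : A ⟶ B, f = 0) ↔ ∀ g : A' ⟶ B', g = 0 :=
  ⟨fun h g => e.symm.injective ((h (e.symm g)).trans (h (e.symm 0)).symm),
    fun h f => e.injective ((h (e f)).trans (h (e 0)).symm)⟩

end ZeroHom

section Shift

variable {D : Type*} [Category D] [HasShift D ℤ]

lemma bijective_comp_shift_map_iff {X Y : D} (f : X ⟶ Y) (W : D) {a b : ℤ} (h : b + a = 0) :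
    (Function.Bijective fun g : W ⟶ X⟦a⟧ => g ≫ f⟦a⟧') ↔
      Function.Bijective fun g : W⟦b⟧ ⟶ X => g ≫ f := by
  let adj : shiftFunctor D b ⊣ shiftFunctor D a := (shiftEquiv' D b a h).toAdjunction
  have hcomm : (fun g : W ⟶ X⟦a⟧ => g ≫ f⟦a⟧') ∘ adj.homEquiv W X =
      adj.homEquiv W Y ∘ fun g => g ≫ f := by
    funext g
    exact (adj.homEquiv_naturality_right g f).symm
  rw [← Equiv.bijective_comp (adj.homEquiv W X), hcomm, Equiv.comp_bijective]

lemma bijective_shift_map_comp_iff {X Y : D} (f : X ⟶ Y) (W : D) {a b : ℤ} (h : a + b = 0) :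
    (Function.Bijective fun g : Y⟦a⟧ ⟶ W => f⟦a⟧' ≫ g) ↔
      Function.Bijective fun g : Y ⟶ W⟦b⟧ => f ≫ g := by
  let adj : shiftFunctor D a ⊣ shiftFunctor D b := (shiftEquiv' D a b h).toAdjunction
  have hcomm : adj.homEquiv X W ∘ (fun g : Y⟦a⟧ ⟶ W => f⟦a⟧' ≫ g) =
      (fun g => f ≫ g) ∘ adj.homEquiv Y W := by
    funext g
    exact adj.homEquiv_naturality_left f g
  rw [← Equiv.comp_bijective _ (adj.homEquiv X W), hcomm, Equiv.bijective_comp]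

section ShiftOrthogonal

variable [HasZeroMorphisms D]

def ShiftOrthogonal (X Y : D) : Prop :=
  ∀ (n : ℤ) (f : X ⟶ Y⟦n⟧), f = 0

namespace ShiftOrthogonal

variable {X Y : D}

lemma eq_zero (h : ShiftOrthogonal X Y) (f : X ⟶ Y) : f = 0 :=
  (forall_hom_eq_zero_congr ((shiftFunctorZero D ℤ).app Y).homToEquiv).1 (h 0) f

lemma shift_eq_zero (h : ShiftOrthogonal X Y) (a : ℤ) (f : X⟦a⟧ ⟶ Y) : f = 0 :=
  (forall_hom_eq_zero_congr ((shiftEquiv' D a (-a) (by omega)).toAdjunction.homEquiv X Y)).2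
    (h (-a)) f

lemma of_shift_right {a : ℤ} (h : ShiftOrthogonal X (Y⟦a⟧)) : ShiftOrthogonal X Y := fun n =>
  (forall_hom_eq_zero_congr
    ((shiftFunctorAdd' D a (n - a) n (by omega)).app Y).symm.homToEquiv).1 (h (n - a))

lemma of_shift_left {a : ℤ} (h : ShiftOrthogonal (X⟦a⟧) Y) : ShiftOrthogonal X Y := fun n =>
  (forall_hom_eq_zero_congr
    (((shiftEquiv' D a (-a) (by omega)).toAdjunction.homEquiv X (Y⟦n + a⟧)).trans
      ((shiftFunctorAdd' D (n + a) (-a) n (by omega)).app Y).symm.homToEquiv)).1 (h (n + a))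

lemma of_iso_right {Y' : D} (h : ShiftOrthogonal X Y) (e : Y ≅ Y') :
    ShiftOrthogonal X Y' := fun n =>
  (forall_hom_eq_zero_congr ((shiftFunctor D n).mapIso e).homToEquiv).1 (h n)

end ShiftOrthogonal

end ShiftOrthogonal

end Shift

section Serre

variable {k} {D : Type*} [Category D] [Preadditive D] [Linear k D] (d : SerreFunctorData k D)

namespace SerreFunctorData

lemma bijective_comp_iff {X X' : D} (v : X' ⟶ X) (Y : D) :
    (Function.Bijective fun g : X ⟶ Y => v ≫ g) ↔
      Function.Bijective fun h : Y ⟶ d.E.functor.obj X' => h ≫ d.E.functor.map v := by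
  have hcomm : d.pairing X' Y ∘ (fun g : X ⟶ Y => v ≫ g) =
      (Linear.rightComp k Y (d.E.functor.map v)).dualMap ∘ d.pairing X Y := by
    funext g
    ext h
    exact d.naturality_left v g h
  calc (Function.Bijective fun g : X ⟶ Y => v ≫ g)
      ↔ Function.Bijective (d.pairing X' Y ∘ fun g : X ⟶ Y => v ≫ g) :=
        ((d.pairing X' Y).toEquiv.comp_bijective _).symm
    _ ↔ Function.Bijective (Linear.rightComp k Y (d.E.functor.map v)).dualMap := by
        rw [hcomm]
        exact (d.pairing X Y).toEquiv.bijective_comp _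
    _ ↔ _ := LinearMap.dualMap_bijective_iff

lemma forall_eq_zero_iff (X Y : D) :
    (∀ f : X ⟶ Y, f = 0) ↔ ∀ g : Y ⟶ d.E.functor.obj X, g = 0 := by
  simp only [← subsingleton_iff_forall_eq (0 : _ ⟶ _)]
  rw [(d.pairing X Y).toEquiv.subsingleton_congr, Module.subsingleton_dual_iff]

lemma shiftOrthogonal_iff [HasShift D ℤ] (X Y : D) :
    ShiftOrthogonal X Y ↔ ShiftOrthogonal Y (d.E.functor.obj X) := by
  have h (n : ℤ) :
      (∀ f : X ⟶ Y⟦n⟧, f = 0) ↔ ∀ g : Y ⟶ (d.E.functor.obj X)⟦-n⟧, g = 0 :=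
    (d.forall_eq_zero_iff _ _).trans
      (forall_hom_eq_zero_congr ((shiftEquiv' D n (-n) (by omega)).toAdjunction.homEquiv _ _))
  exact ⟨fun hXY m => by
    have := (h (-m)).1 (hXY (-m))
    rwa [neg_neg] at this, fun hYX n => (h n).2 (hYX (-n))⟩

end SerreFunctorData

end Serre

section Triangulated

variable {D : Type*} [Category D] [Preadditive D] [HasZeroObject D] [HasShift D ℤ]
  [∀ n : ℤ, (shiftFunctor D n).Additive] [Pretriangulated D] (P : D → Prop)

lemma rightOrthogonal_obj₃_of_distTriang
    (hP : ∀ (X : D) (n : ℤ), P X → P (X⟦n⟧)) {T : Triangle D} (hT : T ∈ distTriang D)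
    (h : ∀ W, P W → Function.Bijective fun g : W ⟶ T.obj₁ => g ≫ T.mor₁) :
    RightOrthogonal P T.obj₃ := by
  suffices ∀ W, P W → ∀ f : W ⟶ T.obj₃, f = 0 from fun Z hZ n =>
    (forall_hom_eq_zero_congr ((shiftEquiv' D (-n) n (by omega)).toAdjunction.homEquiv _ _)).1
      (this _ (hP Z (-n) hZ))
  intro W hW f
  have hf : f ≫ T.mor₃ = 0 := by
    apply ((bijective_comp_shift_map_iff T.mor₁ W (b := -1) (by omega)).2 (h _ (hP W _ hW))).1
    simp [comp_distTriang_mor_zero₃₁ _ hT]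
  obtain ⟨g, rfl⟩ := Triangle.coyoneda_exact₃ T hT f hf
  obtain ⟨u, rfl⟩ := (h W hW).2 g
  simp [comp_distTriang_mor_zero₁₂ _ hT]

lemma leftOrthogonal_obj₃_of_distTriang
    (hP : ∀ (X : D) (n : ℤ), P X → P (X⟦n⟧)) {T : Triangle D} (hT : T ∈ distTriang D)
    (h : ∀ W, P W → Function.Bijective fun g : T.obj₂ ⟶ W => T.mor₁ ≫ g) :
    LeftOrthogonal P T.obj₃ := by
  suffices ∀ W, P W → ∀ f : T.obj₃ ⟶ W, f = 0 from fun Z hZ n => this _ (hP Z n hZ)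
  intro W hW f
  have hf : T.mor₂ ≫ f = 0 := by
    apply (h W hW).1
    simp [reassoc_of% comp_distTriang_mor_zero₁₂ _ hT]
  obtain ⟨g, rfl⟩ := Triangle.yoneda_exact₃ T hT f hf
  obtain ⟨u, rfl⟩ :=
    ((bijective_shift_map_comp_iff T.mor₁ W (b := -1) (by omega)).2 (h _ (hP W _ hW))).2 g
  simp [reassoc_of% comp_distTriang_mor_zero₃₁ _ hT]

lemma bijective_comp_mor₁_of_shiftOrthogonal {T : Triangle D} (hT : T ∈ distTriang D) {Z : D}
    (hZ : ShiftOrthogonal Z T.obj₃) :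
    Function.Bijective fun g : Z ⟶ T.obj₁ => g ≫ T.mor₁ := by
  have hker (g : Z ⟶ T.obj₁) (hg : g ≫ T.mor₁ = 0) : g = 0 := by
    obtain ⟨u, hu⟩ := Triangle.coyoneda_exact₂ _ (inv_rot_of_distTriang _ hT) g hg
    have hu₀ : u = 0 := hZ (-1) u
    rw [hu, hu₀]
    exact zero_comp
  refine ⟨fun g₁ g₂ hg => sub_eq_zero.1 (hker _ ?_), fun f => ?_⟩
  · rw [Preadditive.sub_comp, sub_eq_zero]
    exact hg
  · obtain ⟨g, rfl⟩ := Triangle.coyoneda_exact₂ T hT f (hZ.eq_zero _)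
    exact ⟨g, rfl⟩

lemma bijective_mor₂_comp_of_shiftOrthogonal {T : Triangle D} (hT : T ∈ distTriang D) {Z : D}
    (hZ : ShiftOrthogonal T.obj₁ Z) :
    Function.Bijective fun g : T.obj₃ ⟶ Z => T.mor₂ ≫ g := by
  have hker (g : T.obj₃ ⟶ Z) (hg : T.mor₂ ≫ g = 0) : g = 0 := by
    obtain ⟨u, hu⟩ := Triangle.yoneda_exact₃ T hT g hg
    rw [hu, hZ.shift_eq_zero 1 u, comp_zero]
  refine ⟨fun g₁ g₂ hg => sub_eq_zero.1 (hker _ ?_), fun f => ?_⟩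
  · rw [Preadditive.comp_sub, sub_eq_zero]
    exact hg
  · obtain ⟨g, rfl⟩ := Triangle.yoneda_exact₂ T hT f (hZ.eq_zero _)
    exact ⟨g, rfl⟩

lemma isRightAdjoint_ι_rightOrthogonal (hP : ∀ (X : D) (n : ℤ), P X → P (X⟦n⟧))
    (h : (ObjectProperty.ι P).IsLeftAdjoint) :
    (ObjectProperty.ι (RightOrthogonal P)).IsRightAdjoint := by
  refine (isRightAdjoint_ι_iff _).2 fun X => ?_
  obtain ⟨A, ε, hA, hε⟩ := (isLeftAdjoint_ι_iff P).1 h X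
  obtain ⟨Y, p, δ, hT⟩ := distinguished_cocone_triangle ε
  exact ⟨Y, p, rightOrthogonal_obj₃_of_distTriang P hP hT hε,
    fun Z hZ => bijective_mor₂_comp_of_shiftOrthogonal hT (hZ A hA)⟩

lemma isLeftAdjoint_ι_leftOrthogonal (hP : ∀ (X : D) (n : ℤ), P X → P (X⟦n⟧))
    (h : (ObjectProperty.ι P).IsRightAdjoint) :
    (ObjectProperty.ι (LeftOrthogonal P)).IsLeftAdjoint := by
  refine (isLeftAdjoint_ι_iff _).2 fun X => ?_
  obtain ⟨B, η, hB, hη⟩ := (isRightAdjoint_ι_iff P).1 h X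
  obtain ⟨Y, q, δ, hT⟩ := distinguished_cocone_triangle₁ η
  exact ⟨Y, q, fun Z hZ => ShiftOrthogonal.of_shift_left
      (leftOrthogonal_obj₃_of_distTriang P hP (rot_of_distTriang _ hT) hη Z hZ),
    fun Z hZ => bijective_comp_mor₁_of_shiftOrthogonal hT (hZ B hB)⟩

variable {k} [Linear k D]

lemma isLeftAdjoint_ι_rightOrthogonal (d : SerreFunctorData k D)
    (hP : ∀ (X : D) (n : ℤ), P X → P (X⟦n⟧)) (h : (ObjectProperty.ι P).IsRightAdjoint) :
    (ObjectProperty.ι (RightOrthogonal P)).IsLeftAdjoint := by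
  refine (isLeftAdjoint_ι_iff _).2 fun X => ?_
  obtain ⟨B, η, hB, hη⟩ := (isRightAdjoint_ι_iff P).1 h (d.E.inverse.obj X)
  have hf (W : D) (hW : P W) : Function.Bijective fun g : W ⟶ X =>
      g ≫ (d.E.counitIso.app X).symm.hom ≫ d.E.functor.map η :=
    (bijective_comp_iso_comp_iff _ _ W).2 ((d.bijective_comp_iff η W).1 (hη W hW))
  obtain ⟨Y, q, δ, hT⟩ :=
    distinguished_cocone_triangle₁ ((d.E.counitIso.app X).symm.hom ≫ d.E.functor.map η)
  exact ⟨Y, q, fun Z hZ => ShiftOrthogonal.of_shift_right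
      (rightOrthogonal_obj₃_of_distTriang P hP (rot_of_distTriang _ hT) hf Z hZ),
    fun Z hZ =>
      bijective_comp_mor₁_of_shiftOrthogonal hT ((d.shiftOrthogonal_iff B Z).1 (hZ B hB))⟩

lemma isRightAdjoint_ι_leftOrthogonal (d : SerreFunctorData k D)
    (hP : ∀ (X : D) (n : ℤ), P X → P (X⟦n⟧)) (h : (ObjectProperty.ι P).IsLeftAdjoint) :
    (ObjectProperty.ι (LeftOrthogonal P)).IsRightAdjoint := by
  refine (isRightAdjoint_ι_iff _).2 fun X => ?_
  obtain ⟨A, ε, hA, hε⟩ := (isLeftAdjoint_ι_iff P).1 h (d.E.functor.obj X)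
  obtain ⟨f, hf⟩ : ∃ f : d.E.inverse.obj A ⟶ X,
      (d.E.counitIso.app A).symm.hom ≫ d.E.functor.map f = ε :=
    ⟨d.E.inverse.map ε ≫ d.E.unitIso.inv.app X, by simp⟩
  obtain ⟨Y, p, δ, hT⟩ := distinguished_cocone_triangle f
  exact ⟨Y, p, leftOrthogonal_obj₃_of_distTriang P hP hT fun W hW =>
      (d.bijective_comp_iff f W).2 ((bijective_comp_iso_comp_iff _ _ W).1 (hf ▸ hε W hW)),
    fun Z hZ => bijective_mor₂_comp_of_shiftOrthogonal hT ((d.shiftOrthogonal_iff _ Z).2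
      (ShiftOrthogonal.of_iso_right (hZ A hA) (d.E.counitIso.app A).symm))⟩

end Triangulated

theorem orthogonals_admissible
    (hSerre : Nonempty (SerreFunctorData k C)) (P : C → Prop)
    (hshift : ∀ (X : C) (n : ℤ), P X → P (X⟦n⟧))
    (hLadj : (ObjectProperty.ι P).IsRightAdjoint)
    (hRadj : (ObjectProperty.ι P).IsLeftAdjoint) :
    ((ObjectProperty.ι (RightOrthogonal P)).IsRightAdjoint ∧
      (ObjectProperty.ι (RightOrthogonal P)).IsLeftAdjoint) ∧
    ((ObjectProperty.ι (LeftOrthogonal P)).IsRightAdjoint ∧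
      (ObjectProperty.ι (LeftOrthogonal P)).IsLeftAdjoint) := by
  obtain ⟨d⟩ := hSerre
  exact ⟨⟨isRightAdjoint_ι_rightOrthogonal P hshift hRadj,
      isLeftAdjoint_ι_rightOrthogonal P d hshift hLadj⟩,
    ⟨isRightAdjoint_ι_leftOrthogonal P d hshift hRadj,
      isLeftAdjoint_ι_leftOrthogonal P hshift hLadj⟩⟩
end

section
/- Let B be the heart of a t-structure on D glued from a recollement of triangulated categories X, D, Y, with hearts B₁ on X and B₂ on Y. Then B is noetherian (respectively artinian, respectively a length category) if and only if both B₁ and B₂ are noetherian (respectively artinian, respectively length categories). -/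
open CategoryTheory CategoryTheory.Limits CategoryTheory.Abelian ZeroObject

universe v₁ v₂ v₃ u₁ u₂ u₃

namespace GHL

lemma wf_transfer {α : Type*} {β : Type*} [PartialOrder α] [PartialOrder β]
    (f : α → β) (hmono : Monotone f) (hinj : ∀ a b : α, a ≤ b → f a = f b → a = b) :
    (WellFoundedGT β → WellFoundedGT α) ∧ (WellFoundedLT β → WellFoundedLT α) := by
  constructor
  · intro hβ
    refine ⟨(wellFoundedGT_iff_monotone_chain_condition.2 fun a => ?_).wf⟩
    obtain ⟨n, hn⟩ := wellFoundedGT_iff_monotone_chain_condition.1 ⟨hβ.wf⟩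
      ⟨fun n => f (a n), fun _ _ h => hmono (a.monotone h)⟩
    exact ⟨n, fun m hm => hinj _ _ (a.monotone hm) (hn m hm)⟩
  · intro hβ
    refine ⟨((wellFoundedGT_iff_monotone_chain_condition (α := αᵒᵈ)).2 fun a => ?_).wf⟩
    obtain ⟨n, hn⟩ := (wellFoundedGT_iff_monotone_chain_condition (α := βᵒᵈ)).1 ⟨hβ.wf⟩
      ⟨fun n => f (a n), fun _ _ h => hmono (a.monotone h)⟩
    exact ⟨n, fun m hm => (hinj _ _ (a.monotone hm) ((hn m hm).symm)).symm⟩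

lemma mono_preimage {C : Type*} {D : Type*} [Category C] [Category D]
    (F : C ⥤ D) [F.Full] [F.Faithful] {A A' : C} (f : F.obj A ⟶ F.obj A') [Mono f] :
    Mono (F.preimage f) :=
  F.mono_of_mono_map (by rwa [F.map_preimage])

lemma map_wf {C : Type*} {D : Type*} [Category C] [Category D]
    (F : C ⥤ D) [F.Full] [F.Faithful] [F.PreservesMonomorphisms] (X : C) :
    (WellFoundedGT (Subobject (F.obj X)) → WellFoundedGT (Subobject X)) ∧
    (WellFoundedLT (Subobject (F.obj X)) → WellFoundedLT (Subobject X)) := by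
  refine wf_transfer (fun S : Subobject X => Subobject.mk (F.map S.arrow)) ?_ ?_
  · intro S T h
    exact Subobject.mk_le_mk_of_comm (F.map (Subobject.ofLE S T h))
      (by rw [← F.map_comp, Subobject.ofLE_arrow])
  · intro S T h heq
    have hu : F.map (Subobject.ofLE S T h) = (Subobject.isoOfMkEqMk _ _ heq).hom := by
      rw [← cancel_mono (F.map T.arrow), ← F.map_comp, Subobject.ofLE_arrow]
      exact (Subobject.ofMkLEMk_comp heq.le).symm
    have h1 : IsIso (F.map (Subobject.ofLE S T h)) := by rw [hu]; infer_instance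
    have h2 : IsIso (Subobject.ofLE S T h) := isIso_of_reflects_iso _ F
    refine le_antisymm h (Subobject.le_of_comm (inv (Subobject.ofLE S T h)) ?_)
    rw [IsIso.inv_comp_eq, Subobject.ofLE_arrow]

lemma essImage_wf {B : Type*} {B₁ : Type*} [Category B] [Category B₁]
    (iStar : B₁ ⥤ B) [iStar.Full] [iStar.Faithful]
    (hSub : ∀ (X Y : B) (f : X ⟶ Y), Mono f → iStar.essImage Y → iStar.essImage X)
    (Y : B) (hY : iStar.essImage Y) :
    ((∀ Z : B₁, WellFoundedGT (Subobject Z)) → WellFoundedGT (Subobject Y)) ∧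
    ((∀ Z : B₁, WellFoundedLT (Subobject Z)) → WellFoundedLT (Subobject Y)) := by
  set W := Functor.essImage.witness hY with hW
  set e : iStar.obj W ≅ Y := Functor.essImage.getIso hY with he
  have hV : ∀ V : Subobject Y, iStar.essImage (V : B) := fun V =>
    hSub _ _ V.arrow inferInstance hY
  set m : ∀ V : Subobject Y, (iStar.obj (Functor.essImage.witness (hV V)) ⟶ iStar.obj W) :=
    fun V => (Functor.essImage.getIso (hV V)).hom ≫ V.arrow ≫ e.inv with hm
  have hmono : ∀ V, Mono (m V) := fun V => by
    rw [hm]; exact mono_comp _ _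
  have hpre : ∀ V, Mono (iStar.preimage (m V)) := fun V => by
    have := hmono V
    exact mono_preimage iStar (m V)
  have base :
      ((WellFoundedGT (Subobject W)) → WellFoundedGT (Subobject Y)) ∧
      ((WellFoundedLT (Subobject W)) → WellFoundedLT (Subobject Y)) := by
    refine wf_transfer (fun V : Subobject Y =>
      haveI := hpre V
      Subobject.mk (iStar.preimage (m V))) ?_ ?_
    · intro V V' h
      haveI := hpre V; haveI := hpre V'; haveI := hmono V; haveI := hmono V'
      refine Subobject.mk_le_mk_of_comm
        (iStar.preimage ((Functor.essImage.getIso (hV V)).hom ≫ Subobject.ofLE V V' h ≫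
          (Functor.essImage.getIso (hV V')).inv)) ?_
      apply iStar.map_injective
      rw [iStar.map_comp, iStar.map_preimage, iStar.map_preimage, hm]
      simp [Subobject.ofLE_arrow]
    · intro V V' h heq
      haveI := hpre V; haveI := hpre V'; haveI := hmono V; haveI := hmono V'
      have hcomp := Subobject.ofMkLEMk_comp heq.le
      have hcomp' : iStar.map (Subobject.ofMkLEMk _ _ heq.le) ≫ m V' = m V := by
        calc iStar.map (Subobject.ofMkLEMk _ _ heq.le) ≫ m V'
            = iStar.map (Subobject.ofMkLEMk _ _ heq.le) ≫ iStar.map (iStar.preimage (m V')) := by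
              rw [iStar.map_preimage]
          _ = iStar.map (Subobject.ofMkLEMk _ _ heq.le ≫ iStar.preimage (m V')) :=
              (iStar.map_comp _ _).symm
          _ = iStar.map (iStar.preimage (m V)) := by rw [hcomp]
          _ = m V := iStar.map_preimage _
      refine Subobject.eq_of_comm
        ((Functor.essImage.getIso (hV V)).symm ≪≫ iStar.mapIso (Subobject.isoOfMkEqMk _ _ heq)
          ≪≫ (Functor.essImage.getIso (hV V'))) ?_
      have h5 : iStar.map (Subobject.ofMkLEMk _ _ heq.le) ≫
            (Functor.essImage.getIso (hV V')).hom ≫ V'.arrow =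
          (Functor.essImage.getIso (hV V)).hom ≫ V.arrow := by
        have h6 := hcomp' =≫ e.hom
        simp only [hm, Category.assoc, Iso.inv_hom_id, Category.comp_id] at h6
        exact h6
      simp only [Iso.trans_hom, Iso.symm_hom, Functor.mapIso_hom, Category.assoc]
      rw [Subobject.isoOfMkEqMk]
      dsimp
      rw [h5, Iso.inv_hom_id_assoc]
  exact ⟨fun h => base.1 (h W), fun h => base.2 (h W)⟩

section AbelianAux

variable {B : Type*} [Category B] [Abelian B]
variable {B₁ : Type*} [Category B₁]
variable {B₂ : Type*} [Category B₂] [Abelian B₂]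

lemma coker_essImage (iStar : B₁ ⥤ B) (jStar : B ⥤ B₂) (jR : B₂ ⥤ B) (adjJ₂ : jStar ⊣ jR)
    [jStar.PreservesMonomorphisms]
    (hker : ∀ X : B, IsZero (jStar.obj X) ↔ iStar.essImage X)
    {X : B} (S T : Subobject X) (h : S ≤ T)
    (heq : Subobject.mk (jStar.map S.arrow) = Subobject.mk (jStar.map T.arrow)) :
    iStar.essImage (cokernel (Subobject.ofLE S T h)) := by
  haveI : PreservesColimitsOfSize.{0,0} jStar := adjJ₂.leftAdjoint_preservesColimits
  have h1 : jStar.map (Subobject.ofLE S T h) = (Subobject.isoOfMkEqMk _ _ heq).hom := by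
    rw [← cancel_mono (jStar.map T.arrow), ← jStar.map_comp, Subobject.ofLE_arrow]
    exact (Subobject.ofMkLEMk_comp heq.le).symm
  have h2 : IsIso (jStar.map (Subobject.ofLE S T h)) := by rw [h1]; infer_instance
  have h3 : jStar.obj (cokernel (Subobject.ofLE S T h)) ≅
      cokernel (jStar.map (Subobject.ofLE S T h)) :=
    PreservesCokernel.iso jStar _
  have h4 : cokernel (jStar.map (Subobject.ofLE S T h)) ≅ 0 := cokernel.ofEpi _
  exact (hker _).1 ((isZero_zero B₂).of_iso (h3 ≪≫ h4))

lemma phi_mono {X Q : B} (π : X ⟶ Q) (S T : Subobject X) (h : S ≤ T) :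
    Subobject.mk (Abelian.image.ι (S.arrow ≫ π)) ≤
      Subobject.mk (Abelian.image.ι (T.arrow ≫ π)) := by
  have hs : S.arrow ≫ π = Subobject.ofLE S T h ≫ (T.arrow ≫ π) := by
    rw [← Category.assoc, Subobject.ofLE_arrow]
  have hz : Abelian.image.ι (S.arrow ≫ π) ≫ cokernel.π (T.arrow ≫ π) = 0 := by
    rw [← cancel_epi (Abelian.factorThruImage (S.arrow ≫ π)), ← Category.assoc,
      Abelian.image.fac, hs, Category.assoc, cokernel.condition, comp_zero, comp_zero]
  exact Subobject.mk_le_mk_of_comm (kernel.lift _ _ hz) (kernel.lift_ι _ _ _)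

lemma image_essImage (iStar : B₁ ⥤ B)
    (hQuot : ∀ (X Y : B) (f : X ⟶ Y), Epi f → iStar.essImage X → iStar.essImage Y)
    {X : B} (K S : Subobject X) (hKS : K ≤ S)
    (hC : iStar.essImage (cokernel (Subobject.ofLE K S hKS))) :
    iStar.essImage
      ((Subobject.mk (Abelian.image.ι (S.arrow ≫ cokernel.π K.arrow)) :
        Subobject (cokernel K.arrow)) : B) := by
  have hw : Subobject.ofLE K S hKS ≫
      Abelian.factorThruImage (S.arrow ≫ cokernel.π K.arrow) = 0 := by
    rw [← cancel_mono (Abelian.image.ι (S.arrow ≫ cokernel.π K.arrow)), Category.assoc,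
      Abelian.image.fac, ← Category.assoc, Subobject.ofLE_arrow, cokernel.condition, zero_comp]
  have hd : Epi (cokernel.desc _ _ hw) := epi_of_epi_fac (cokernel.π_desc _ _ hw)
  exact Functor.essImage.ofIso (Subobject.underlyingIso _).symm (hQuot _ _ _ hd hC)

attribute [local instance] CategoryTheory.Abelian.Pseudoelement.objectToSort
  CategoryTheory.Abelian.Pseudoelement.homToFun

open CategoryTheory.Abelian.Pseudoelement in
lemma phi_inj {X : B} (K S T : Subobject X) (hKS : K ≤ S) (hST : S ≤ T)
    (heq : Subobject.mk (Abelian.image.ι (S.arrow ≫ cokernel.π K.arrow)) =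
           Subobject.mk (Abelian.image.ι (T.arrow ≫ cokernel.π K.arrow))) :
    S = T := by
  set π := cokernel.π K.arrow with hπ
  set u := Subobject.ofLE S T hST with hu
  suffices hue : Epi u by
    haveI := hue
    haveI : IsIso u := isIso_of_mono_of_epi u
    refine le_antisymm hST (Subobject.le_of_comm (inv u) ?_)
    rw [IsIso.inv_comp_eq, hu, Subobject.ofLE_arrow]
  apply epi_of_pseudo_surjective
  intro p
  set mS := Abelian.image.ι (S.arrow ≫ π) with hmS
  set mT := Abelian.image.ι (T.arrow ≫ π) with hmT
  set eS := Abelian.factorThruImage (S.arrow ≫ π) with heS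
  set eT := Abelian.factorThruImage (T.arrow ≫ π) with heT
  set v := Subobject.isoOfMkEqMk mS mT heq with hv
  have hvc : v.hom ≫ mT = mS := Subobject.ofMkLEMk_comp heq.le
  obtain ⟨q₀, hq₀⟩ := pseudo_surjective_of_epi eS (v.inv (eT p))
  have key : (π : X ⟶ cokernel K.arrow) (T.arrow p) = π (S.arrow q₀) := by
    have h1 : (π : X ⟶ cokernel K.arrow) (T.arrow p) = mT (eT p) := by
      rw [← Pseudoelement.comp_apply, ← Pseudoelement.comp_apply, heT, hmT, Abelian.image.fac]
    have h2 : (π : X ⟶ cokernel K.arrow) (S.arrow q₀) = mS (eS q₀) := by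
      rw [← Pseudoelement.comp_apply, ← Pseudoelement.comp_apply, heS, hmS, Abelian.image.fac]
    rw [h1, h2, hq₀]
    have hvm : v.inv ≫ mS = mT := by rw [← hvc, Iso.inv_hom_id_assoc]
    rw [← hvm, Pseudoelement.comp_apply]
  obtain ⟨z, hz0, hz⟩ := sub_of_eq_image π (T.arrow p) (S.arrow q₀) key
  obtain ⟨k, hk⟩ := pseudo_exact_of_exact (ShortComplex.exact_cokernel K.arrow) z hz0
  have hzS : (cokernel.π S.arrow) z = 0 := by
    have hz' : z = S.arrow ((Subobject.ofLE K S hKS) k) := by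
      rw [← Pseudoelement.comp_apply, Subobject.ofLE_arrow, hk]
    rw [hz', ← Pseudoelement.comp_apply, cokernel.condition, Pseudoelement.zero_apply]
  have h2 : (cokernel.π S.arrow) (T.arrow p) = 0 := by
    rw [← hz _ (cokernel.π S.arrow)
      (by rw [← Pseudoelement.comp_apply, cokernel.condition, Pseudoelement.zero_apply]), hzS]
  obtain ⟨q, hq⟩ := pseudo_exact_of_exact (ShortComplex.exact_cokernel S.arrow) (T.arrow p) h2
  refine ⟨q, pseudo_injective_of_mono T.arrow ?_⟩
  rw [← Pseudoelement.comp_apply, hu, Subobject.ofLE_arrow, hq]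

end AbelianAux

end GHL


variable {B : Type u₁} [Category.{v₁} B] [Abelian B]
variable {B₁ : Type u₂} [Category.{v₂} B₁] [Abelian B₁]
variable {B₂ : Type u₃} [Category.{v₃} B₂] [Abelian B₂]

/-- An abelian category is noetherian if every object satisfies the ascending chain
condition on subobjects. -/
def NoetherianCat (A : Type*) [Category A] : Prop :=
  ∀ X : A, WellFoundedGT (Subobject X)

/-- An abelian category is artinian if every object satisfies the descending chain
condition on subobjects. -/
def ArtinianCat (A : Type*) [Category A] : Prop :=
  ∀ X : A, WellFoundedLT (Subobject X)

/-- A length category is an abelian category that is both noetherian and artinian. -/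
def LengthCat (A : Type*) [Category A] : Prop :=
  NoetherianCat A ∧ ArtinianCat A

set_option maxHeartbeats 1000000 in
/-- The heart `B` of a t-structure glued from a recollement, together with the hearts `B₁`
(identified via `ⁱp i_*` with a Serre subcategory of `B`) and `B₂` (identified via `ⁱp j^*`
with the quotient `B/B₁`).  The hypotheses record the recollement of abelian categories:
adjoint triples `(ⁱp i^*, ⁱp i_*, ⁱp i^!)` and `(ⁱp j_!, ⁱp j^*, ⁱp j_*)`, full faithfulness,
the kernel condition, the Serre subcategory property of the image of `ⁱp i_*`, and the fact
that every object of `B` has a largest subobject belonging to `B₁` (dually, a largest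
quotient belonging to `B₁`).  Conclusion: `B` is noetherian (resp. artinian, resp. a length
category) if and only if both `B₁` and `B₂` are. -/
theorem glued_heart_noetherian_artinian_length_iff
    (iStar : B₁ ⥤ B) (iL iR : B ⥤ B₁)
    (adjI₁ : iL ⊣ iStar) (adjI₂ : iStar ⊣ iR)
    (hiFull : iStar.Full) (hiFaithful : iStar.Faithful)
    (jStar : B ⥤ B₂) (jL jR : B₂ ⥤ B)
    (adjJ₁ : jL ⊣ jStar) (adjJ₂ : jStar ⊣ jR)
    (hjLFull : jL.Full) (hjLFaithful : jL.Faithful)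
    (hjRFull : jR.Full) (hjRFaithful : jR.Faithful)
    (hker : ∀ X : B, IsZero (jStar.obj X) ↔ iStar.essImage X)
    -- the essential image of `iStar` is a Serre subcategory of `B`:
    (hSub : ∀ (X Y : B) (f : X ⟶ Y), Mono f → iStar.essImage Y → iStar.essImage X)
    (hQuot : ∀ (X Y : B) (f : X ⟶ Y), Epi f → iStar.essImage X → iStar.essImage Y)
    (hExt : ∀ (X Y Z : B) (i : X ⟶ Y) (p : Y ⟶ Z) (w : i ≫ p = 0), Mono i → Epi p →
      (ShortComplex.mk i p w).Exact → iStar.essImage X → iStar.essImage Z →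
        iStar.essImage Y)
    -- every object of `B` has a largest subobject belonging to `B₁`:
    (hLargestSub : ∀ X : B, ∃ S : Subobject X, iStar.essImage (S : B) ∧
      ∀ T : Subobject X, iStar.essImage (T : B) → T ≤ S)
    -- dually, every object of `B` has a largest quotient belonging to `B₁`:
    (hLargestQuot : ∀ X : B, ∃ S : Subobject X, iStar.essImage (cokernel S.arrow) ∧
      ∀ T : Subobject X, iStar.essImage (cokernel T.arrow) → S ≤ T) :
    (NoetherianCat B ↔ NoetherianCat B₁ ∧ NoetherianCat B₂) ∧
    (ArtinianCat B ↔ ArtinianCat B₁ ∧ ArtinianCat B₂) ∧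
    (LengthCat B ↔ LengthCat B₁ ∧ LengthCat B₂) := by
  haveI := hiFull; haveI := hiFaithful; haveI := hjRFull; haveI := hjRFaithful
  haveI : PreservesLimitsOfSize.{0,0} iStar := adjI₁.rightAdjoint_preservesLimits
  haveI : PreservesLimitsOfSize.{0,0} jStar := adjJ₁.rightAdjoint_preservesLimits
  haveI : PreservesLimitsOfSize.{0,0} jR := adjJ₂.rightAdjoint_preservesLimits
  haveI him : iStar.PreservesMonomorphisms := by infer_instance
  haveI hjm : jStar.PreservesMonomorphisms := by infer_instance
  haveI hjrm : jR.PreservesMonomorphisms := by infer_instance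
  -- forward directions
  have noeth_fwd : NoetherianCat B → NoetherianCat B₁ ∧ NoetherianCat B₂ := fun hB =>
    ⟨fun X₁ => (GHL.map_wf iStar X₁).1 (hB _), fun X₂ => (GHL.map_wf jR X₂).1 (hB _)⟩
  have artin_fwd : ArtinianCat B → ArtinianCat B₁ ∧ ArtinianCat B₂ := fun hB =>
    ⟨fun X₁ => (GHL.map_wf iStar X₁).2 (hB _), fun X₂ => (GHL.map_wf jR X₂).2 (hB _)⟩
  -- reverse noetherian
  have noeth_rev : NoetherianCat B₁ → NoetherianCat B₂ → NoetherianCat B := by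
    intro h₁ h₂ X
    refine ⟨(wellFoundedGT_iff_monotone_chain_condition.2 fun a => ?_).wf⟩
    have ψmono : ∀ {S T : Subobject X}, S ≤ T →
        Subobject.mk (jStar.map S.arrow) ≤ Subobject.mk (jStar.map T.arrow) := fun {S T} h =>
      Subobject.mk_le_mk_of_comm (jStar.map (Subobject.ofLE S T h))
        (by rw [← jStar.map_comp, Subobject.ofLE_arrow])
    obtain ⟨N, hN⟩ := wellFoundedGT_iff_monotone_chain_condition.1 ⟨(h₂ (jStar.obj X)).wf⟩
      ⟨fun n => Subobject.mk (jStar.map (a n).arrow), fun _ _ h => ψmono (a.monotone h)⟩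
    obtain ⟨U, hU, hUmax⟩ := hLargestSub (cokernel (a N).arrow)
    have hbU : ∀ n, N ≤ n →
        Subobject.mk (Abelian.image.ι ((a n).arrow ≫ cokernel.π (a N).arrow)) ≤ U := fun n hn =>
      hUmax _ (GHL.image_essImage iStar hQuot (a N) (a n) (a.monotone hn)
        (GHL.coker_essImage iStar jStar jR adjJ₂ hker _ _ _ (hN n hn)))
    have hwfU := (GHL.essImage_wf iStar hSub _ hU).1 h₁
    have cmono : ∀ {n m : ℕ}, n ≤ m →
        Subobject.mk (Subobject.ofLE _ U (hbU (N + n) (by omega))) ≤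
        Subobject.mk (Subobject.ofLE _ U (hbU (N + m) (by omega))) := by
      intro n m h
      refine Subobject.mk_le_mk_of_comm
        (Subobject.ofLE _ _
          (GHL.phi_mono (cokernel.π (a N).arrow) _ _ (a.monotone (by omega)))) ?_
      rw [Subobject.ofLE_comp_ofLE]
    obtain ⟨M, hM⟩ := wellFoundedGT_iff_monotone_chain_condition.1 ⟨hwfU.wf⟩
      ⟨fun n => Subobject.mk (Subobject.ofLE _ U (hbU (N + n) (by omega))),
        fun _ _ h => cmono h⟩
    refine ⟨N + M, fun m hm => ?_⟩
    have hmm : N + (m - N) = m := by omega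
    have hb : Subobject.mk (Abelian.image.ι ((a (N + M)).arrow ≫ cokernel.π (a N).arrow)) =
        Subobject.mk (Abelian.image.ι ((a (N + (m - N))).arrow ≫ cokernel.π (a N).arrow)) := by
      have h7 := hM (m - N) (by omega)
      refine Subobject.eq_of_comm (Subobject.isoOfMkEqMk _ _ h7) ?_
      have h8 := Subobject.ofMkLEMk_comp h7.le
      calc (Subobject.isoOfMkEqMk _ _ h7).hom ≫ (Subobject.mk
            (Abelian.image.ι ((a (N + (m - N))).arrow ≫ cokernel.π (a N).arrow))).arrow
          = (Subobject.isoOfMkEqMk _ _ h7).hom ≫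
              Subobject.ofLE _ U (hbU (N + (m - N)) (by omega)) ≫ U.arrow := by
            rw [Subobject.ofLE_arrow]
        _ = Subobject.ofLE _ U (hbU (N + M) (by omega)) ≫ U.arrow := by
            rw [← Category.assoc]
            exact h8 =≫ U.arrow
        _ = _ := Subobject.ofLE_arrow _
    have hfin := GHL.phi_inj (a N) (a (N + M)) (a (N + (m - N))) (a.monotone (by omega))
        (a.monotone (by omega)) hb
    rw [hmm] at hfin
    exact hfin
  -- reverse artinian
  have artin_rev : ArtinianCat B₁ → ArtinianCat B₂ → ArtinianCat B := by
    intro h₁ h₂ X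
    refine ⟨((wellFoundedGT_iff_monotone_chain_condition (α := (Subobject X)ᵒᵈ)).2 fun a => ?_).wf⟩
    have hanti : ∀ {n m : ℕ}, n ≤ m →
        (OrderDual.ofDual (a m) : Subobject X) ≤ OrderDual.ofDual (a n) :=
      fun {n m} h => a.monotone h
    have ψmono : ∀ {S T : Subobject X}, S ≤ T →
        Subobject.mk (jStar.map S.arrow) ≤ Subobject.mk (jStar.map T.arrow) := fun {S T} h =>
      Subobject.mk_le_mk_of_comm (jStar.map (Subobject.ofLE S T h))
        (by rw [← jStar.map_comp, Subobject.ofLE_arrow])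
    obtain ⟨N, hN⟩ :=
      (wellFoundedGT_iff_monotone_chain_condition (α := (Subobject (jStar.obj X))ᵒᵈ)).1
        ⟨(h₂ (jStar.obj X)).wf⟩
        ⟨fun n => OrderDual.toDual
            (Subobject.mk (jStar.map (OrderDual.ofDual (a n) : Subobject X).arrow)),
          fun _ _ h => ψmono (hanti h)⟩
    -- the cokernels of the inclusions into `a N` lie in `B₁`
    have hcok : ∀ n (hn : N ≤ n),
        iStar.essImage (cokernel (Subobject.ofLE _ _ (hanti hn))) := fun n hn =>
      GHL.coker_essImage iStar jStar jR adjJ₂ hker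
        (OrderDual.ofDual (a n)) (OrderDual.ofDual (a N)) (hanti hn) ((hN n hn).symm)
    -- move to subobjects of `a N`
    have hdc : ∀ n (hn : N ≤ n),
        iStar.essImage (cokernel (Subobject.mk (Subobject.ofLE _ _ (hanti hn))).arrow) := by
      intro n hn
      have h9 : (Subobject.mk (Subobject.ofLE _ _ (hanti hn))).arrow =
          (Subobject.underlyingIso (Subobject.ofLE _ _ (hanti hn))).hom ≫
            Subobject.ofLE _ _ (hanti hn) :=
        ((Subobject.underlyingIso (Subobject.ofLE _ _ (hanti hn))).inv_comp_eq).1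
          (Subobject.underlyingIso_arrow _)
      have i1 : cokernel ((Subobject.mk (Subobject.ofLE _ _ (hanti hn))).arrow) ≅
          cokernel (Subobject.ofLE _ _ (hanti hn)) :=
        cokernelIsoOfEq h9 ≪≫ cokernelEpiComp _ _
      exact Functor.essImage.ofIso i1.symm (hcok n hn)
    obtain ⟨V, hV, hVmin⟩ := hLargestQuot ((OrderDual.ofDual (a N) : Subobject X) : B)
    have hVle : ∀ n (hn : N ≤ n), V ≤ Subobject.mk (Subobject.ofLE _ _ (hanti hn)) :=
      fun n hn => hVmin _ (hdc n hn)
    have hdmono : ∀ {n m : ℕ} (h : n ≤ m),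
        Subobject.mk (Subobject.ofLE _ _ (hanti (show N ≤ N + m by omega))) ≤
        Subobject.mk (Subobject.ofLE _ _ (hanti (show N ≤ N + n by omega))) := by
      intro n m h
      refine Subobject.mk_le_mk_of_comm (Subobject.ofLE _ _ (hanti (by omega : N + n ≤ N + m))) ?_
      rw [Subobject.ofLE_comp_ofLE]
    have hwfV := (GHL.essImage_wf iStar hSub _ hV).2 h₁
    obtain ⟨M, hM⟩ :=
      (wellFoundedGT_iff_monotone_chain_condition (α := (Subobject (cokernel V.arrow))ᵒᵈ)).1 ⟨hwfV.wf⟩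
        ⟨fun n => OrderDual.toDual (Subobject.mk (Abelian.image.ι
            ((Subobject.mk (Subobject.ofLE _ _ (hanti (show N ≤ N + n by omega)))).arrow ≫
              cokernel.π V.arrow))),
          by intro n m h; exact GHL.phi_mono (cokernel.π V.arrow) _ _ (hdmono h)⟩
    refine ⟨N + M, fun m hm => ?_⟩
    have hmm : N + (m - N) = m := by omega
    have hd : Subobject.mk (Subobject.ofLE _ _ (hanti (show N ≤ N + (m - N) by omega))) =
        Subobject.mk (Subobject.ofLE _ _ (hanti (show N ≤ N + M by omega))) := by
      refine GHL.phi_inj V _ _ (hVle (N + (m - N)) (by omega)) (hdmono (by omega : M ≤ m - N)) ?_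
      exact (hM (m - N) (by omega)).symm
    -- deduce equality of the original subobjects
    have hfin : (OrderDual.ofDual (a (N + (m - N))) : Subobject X) =
        OrderDual.ofDual (a (N + M)) := by
      refine Subobject.eq_of_comm (Subobject.isoOfMkEqMk _ _ hd) ?_
      have h8 := Subobject.ofMkLEMk_comp hd.le
      calc (Subobject.isoOfMkEqMk _ _ hd).hom ≫ (OrderDual.ofDual (a (N + M)) : Subobject X).arrow
          = (Subobject.isoOfMkEqMk _ _ hd).hom ≫
              Subobject.ofLE _ _ (hanti (show N ≤ N + M by omega)) ≫
                (OrderDual.ofDual (a N) : Subobject X).arrow := by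
            rw [Subobject.ofLE_arrow]
        _ = Subobject.ofLE _ _ (hanti (show N ≤ N + (m - N) by omega)) ≫
              (OrderDual.ofDual (a N) : Subobject X).arrow := by
            rw [← Category.assoc]
            exact h8 =≫ _
        _ = _ := Subobject.ofLE_arrow _
    have : (OrderDual.ofDual (a (N + M)) : Subobject X) = OrderDual.ofDual (a m) := by
      rw [← hmm]; exact hfin.symm
    exact this
  -- assemble
  have noeth_iff : NoetherianCat B ↔ NoetherianCat B₁ ∧ NoetherianCat B₂ :=
    ⟨noeth_fwd, fun h => noeth_rev h.1 h.2⟩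
  have artin_iff : ArtinianCat B ↔ ArtinianCat B₁ ∧ ArtinianCat B₂ :=
    ⟨artin_fwd, fun h => artin_rev h.1 h.2⟩
  refine ⟨noeth_iff, artin_iff, ?_⟩
  unfold LengthCat
  rw [noeth_iff, artin_iff]
  tauto
end

section
/- Let A be a Hom-finite hereditary abelian category over an algebraically closed field k, and let E, F be indecomposable objects of A with Ext¹(F, E) = 0. Then every nonzero morphism f : E → F is either a monomorphism or an epimorphism. In particular, every indecomposable object without self-extensions is exceptional. -/
/-!
The endomorphism ring of an indecomposable object is local: it is a finite-dimensional algebra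
over an algebraically closed field without nontrivial idempotents, so every element is a scalar
plus a nilpotent.

Factor a nonzero `f : E ⟶ F` as `E ↠ C ↪ F` with kernel `K`. Heredity extends the extension
`0 → K → E → C → 0` along `C ↪ F` to `0 → K → N → F → 0`, with `q : E ⟶ N` over `C ↪ F`, and
`Ext¹(F, E) = 0` extends `K ↪ E` along `K ↪ N` to some `t : N ⟶ E`. As `End E` is local, either
`q ≫ t` is invertible: then `C ↪ F` splits, so it is an isomorphism since `F` is indecomposable,
and `f` is epi; or `1 - q ≫ t` is invertible: it vanishes on `K`, so it factors through `E ↠ C`,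
which is then mono, and `f` is mono. For `E = F = X`, the nilpotent endomorphism `w - c` is mono
or epi unless it is zero, so `End X = k`.
-/

open CategoryTheory CategoryTheory.Limits

universe v u

variable (k : Type*) [Field k] [IsAlgClosed k]
variable {A : Type u} [Category.{v} A] [Abelian A] [Linear k A]

/-- `Ext¹(X, Y) = 0`, expressed by the splitting of every short exact sequence
`0 → Y → M → X → 0`. -/
def Ext1IsZero (X Y : A) : Prop :=
  ∀ (M : A) (i : Y ⟶ M) (p : M ⟶ X) (w : i ≫ p = 0), Mono i → Epi p →
    (ShortComplex.mk i p w).Exact → ∃ r : M ⟶ Y, i ≫ r = 𝟙 Y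

/-- The category `A` is hereditary: `Ext²` vanishes, expressed by the fact that for every
monomorphism `m : K ⟶ Y`, every extension of `K` by `W` is the restriction along `m` of an
extension of `Y` by `W` (surjectivity of `Ext¹(Y, W) → Ext¹(K, W)`). -/
def Hereditary : Prop :=
  ∀ (K Y W : A) (m : K ⟶ Y), Mono m →
    ∀ (M : A) (i : W ⟶ M) (p : M ⟶ K) (w : i ≫ p = 0), Mono i → Epi p →
      (ShortComplex.mk i p w).Exact →
      ∃ (N : A) (i' : W ⟶ N) (p' : N ⟶ Y) (w' : i' ≫ p' = 0) (q : M ⟶ N),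
        Mono i' ∧ Epi p' ∧ (ShortComplex.mk i' p' w').Exact ∧
          i ≫ q = i' ∧ q ≫ p' = p ≫ m

open Polynomial in
theorem exists_isNilpotent_sub_algebraMap_of_isIdempotentElem {R : Type*} [Ring R] [Algebra k R]
    [FiniteDimensional k R] (hR : ∀ e : R, IsIdempotentElem e → e = 0 ∨ e = 1) (s : R) :
    ∃ c : k, IsNilpotent (s - algebraMap k R c) := by
  nontriviality R
  have hs : IsIntegral k s := .of_finite k s
  set P := minpoly k s
  obtain ⟨c, hc⟩ := IsAlgClosed.exists_root P (minpoly.degree_pos hs).ne'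
  obtain ⟨Q, hPQ, hQ⟩ := P.exists_eq_pow_rootMultiplicity_mul_and_not_dvd (minpoly.ne_zero hs) c
  set m := P.rootMultiplicity c
  have hm : m ≠ 0 := ((rootMultiplicity_pos (minpoly.ne_zero hs)).mpr hc).ne'
  obtain ⟨a, b, hab⟩ :=
    ((irreducible_X_sub_C c).coprime_iff_not_dvd.mpr hQ).pow_left (m := m)
  -- the spectral idempotent of `s` for the roots of `Q`, i.e. away from the eigenvalue `c`
  have he : IsIdempotentElem (aeval s (b * Q)) := by
    have : b * Q * (b * Q) = b * Q - a * b * P := by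
      linear_combination (b * Q) * hab + a * b * hPQ
    rw [IsIdempotentElem, ← map_mul, this, map_sub, map_mul (aeval s) (a * b) P, minpoly.aeval,
      mul_zero, sub_zero]
  rcases hR _ he with h0 | h1
  · have hb : X - C c ∣ b := by
      have : X - C c ∣ b * Q := (dvd_iff_isRoot.mpr hc).trans (minpoly.dvd k s h0)
      exact ((prime_X_sub_C c).dvd_or_dvd this).resolve_right hQ
    have := congrArg (eval c) hab
    simp [(dvd_iff_isRoot.mp hb).eq_zero, hm] at this
  · refine ⟨c, m, ?_⟩
    have : (X - C c) ^ m * (b * Q) = b * P := by rw [hPQ]; ring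
    rw [← mul_one (_ ^ m), ← h1]
    simpa [P, minpoly.aeval] using congrArg (aeval s) this

namespace CategoryTheory

section Preadditive

variable {C : Type*} [Category C] [Preadditive C]

theorem End.eq_zero_of_isNilpotent_of_mono {X : C} {t : End X} (ht : IsNilpotent t) [Mono t] :
    t = 0 := by
  obtain ⟨n, hn⟩ := ht
  have hreg : IsLeftRegular t := fun g h hgh => (cancel_mono t).mp hgh
  have : Subsingleton (End X) := (hn ▸ hreg.pow n).subsingleton
  exact Subsingleton.elim _ _

theorem End.eq_zero_of_isNilpotent_of_epi {X : C} {t : End X} (ht : IsNilpotent t) [Epi t] :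
    t = 0 := by
  obtain ⟨n, hn⟩ := ht
  have hreg : IsRightRegular t := fun g h hgh => (cancel_epi t).mp hgh
  have : Subsingleton (End X) := (hn ▸ hreg.pow n).subsingleton
  exact Subsingleton.elim _ _

end Preadditive

variable {C : Type*} [Category C] [Abelian C]

theorem Indecomposable.isIso_of_isSplitMono {X Y : C} (hY : Indecomposable Y) (f : X ⟶ Y)
    [IsSplitMono f] (hX : ¬IsZero X) : IsIso f := by
  have hb := isBilimitBinaryBiconeOfIsSplitMonoOfCokernel (cokernelIsCokernel f)
  rcases hY.2 _ _ (hb.isLimit.conePointUniqueUpToIso (BinaryBiproduct.isLimit _ _)) with h | h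
  · exact absurd h hX
  · have : Epi f := Preadditive.epi_of_isZero_cokernel f h
    exact isIso_of_mono_of_epi f

theorem Indecomposable.eq_zero_or_eq_one_of_isIdempotentElem {X : C} (hX : Indecomposable X)
    {e : End X} (he : IsIdempotentElem e) : e = 0 ∨ e = 1 := by
  obtain ⟨Y, i, r, hir, hri⟩ := IsIdempotentComplete.idempotents_split X e he
  by_cases hY : IsZero Y
  · exact .inl (by rw [← hri, hY.eq_zero_of_src i, comp_zero])
  · have : IsSplitMono i := ⟨⟨r, hir⟩⟩
    have := hX.isIso_of_isSplitMono i hY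
    exact .inr (by rw [← hri, (IsIso.inv_eq_of_hom_inv_id hir).symm, IsIso.inv_hom_id]; rfl)

theorem Indecomposable.exists_isNilpotent_sub_algebraMap {X : C} [Linear k C]
    [FiniteDimensional k (X ⟶ X)] (hX : Indecomposable X) (s : End X) :
    ∃ c : k, IsNilpotent (s - algebraMap k (End X) c) :=
  have : FiniteDimensional k (End X) := ‹_›
  exists_isNilpotent_sub_algebraMap_of_isIdempotentElem k
    (fun _ he => hX.eq_zero_or_eq_one_of_isIdempotentElem he) s

theorem Indecomposable.isLocalRing_end {X : C} [Linear k C] [FiniteDimensional k (X ⟶ X)]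
    (hX : Indecomposable X) : IsLocalRing (End X) :=
  have : Nontrivial (End X) := ⟨⟨1, 0, fun h => hX.1 ((IsZero.iff_id_eq_zero X).mpr h)⟩⟩
  .of_isUnit_or_isUnit_one_sub_self fun s => by
    obtain ⟨c, hc⟩ := hX.exists_isNilpotent_sub_algebraMap k s
    by_cases hc0 : c = 0
    · rw [hc0, map_zero, sub_zero] at hc
      exact .inr hc.isUnit_one_sub
    · have hu : IsUnit (algebraMap k (End X) c) := (Ne.isUnit hc0).map _
      exact .inl (by simpa using hc.isUnit_add_left_of_commute hu (Algebra.commutes c _).symm)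

end CategoryTheory

theorem Ext1IsZero.exists_comp_eq {E F K N : A} (hext : Ext1IsZero F E) {i : K ⟶ N} {p : N ⟶ F}
    {w : i ≫ p = 0} [Mono i] [Epi p] (hS : (ShortComplex.mk i p w).Exact) (g : K ⟶ E) :
    ∃ t : N ⟶ E, i ≫ t = g := by
  have hP := IsPushout.of_hasPushout i g
  set d : pushout i g ⟶ F := pushout.desc p 0 (by simp [w])
  have hd : pushout.inl i g ≫ d = p := pushout.inl_desc _ _ _
  have hd' : pushout.inr i g ≫ d = 0 := pushout.inr_desc _ _ _
  have : Epi d := epi_of_epi_fac hd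
  have hexact : (ShortComplex.mk _ _ hd').Exact := by
    rw [ShortComplex.exact_iff_exact_up_to_refinements]
    intro T x hx
    obtain ⟨T₁, π₁, _, x₁, y₁, hxy⟩ := hP.hom_eq_add_up_to_refinements x
    have hx₁ : x₁ ≫ p = 0 := by
      simpa [hd, hd', hx] using (hxy =≫ d).symm
    obtain ⟨T₂, π₂, _, z, hz⟩ := hS.exact_up_to_refinements x₁ hx₁
    refine ⟨T₂, π₂ ≫ π₁, inferInstance, z ≫ g + π₂ ≫ y₁, ?_⟩
    simp [hxy, reassoc_of% hz, pushout.condition]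
  obtain ⟨r, hr⟩ := hext _ _ d hd' inferInstance this hexact
  exact ⟨pushout.inl i g ≫ r, by rw [pushout.condition_assoc, hr, Category.comp_id]⟩

theorem mono_or_epi_of_ext1IsZero (hhered : Hereditary (A := A)) {E F : A}
    [FiniteDimensional k (E ⟶ E)] (hE : Indecomposable E) (hF : Indecomposable F)
    (hext : Ext1IsZero F E) {f : E ⟶ F} (hf : f ≠ 0) : Mono f ∨ Epi f := by
  set κ := kernel.ι f
  set π := Abelian.coimage.π f
  set m := Abelian.factorThruCoimage f
  have hfac : π ≫ m = f := Abelian.coimage.fac f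
  obtain ⟨N, i, p, w, q, _, _, hN, hκq, hqp⟩ := hhered _ _ _ m inferInstance E κ π
    (cokernel.condition κ) inferInstance inferInstance
    (ShortComplex.exact_of_g_is_cokernel _ (cokernelIsCokernel κ))
  obtain ⟨t, ht⟩ := hext.exists_comp_eq hN κ
  have hκ : κ ≫ q ≫ t = κ := by rw [reassoc_of% hκq, ht]
  rcases (hE.isLocalRing_end k).isUnit_or_isUnit_of_add_one
    (add_sub_cancel (q ≫ t : End E) (1 : End E)) with hu | hu
  · have : IsIso (q ≫ t) := (isUnit_iff_isIso _).mp hu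
    obtain ⟨ρ, hqρ, hiρ⟩ : ∃ ρ : N ⟶ E, q ≫ ρ = 𝟙 E ∧ i ≫ ρ = κ := by
      refine ⟨t ≫ inv (q ≫ t), by rw [← Category.assoc, IsIso.hom_inv_id], ?_⟩
      rw [reassoc_of% ht, ← cancel_mono (q ≫ t), Category.assoc, IsIso.inv_hom_id,
        Category.comp_id, hκ]
    have hiρπ : i ≫ ρ ≫ π = 0 := by rw [reassoc_of% hiρ]; exact cokernel.condition κ
    have : IsSplitMono m := ⟨⟨hN.desc (ρ ≫ π) hiρπ, by
      rw [← cancel_epi π, reassoc_of% hqp.symm]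
      simp [hN.g_desc, reassoc_of% hqρ]⟩⟩
    have hC : ¬IsZero (Abelian.coimage f) := fun h =>
      hf (by rw [← hfac, h.eq_zero_of_tgt π, zero_comp])
    have := hF.isIso_of_isSplitMono m hC
    exact .inr (hfac ▸ epi_comp π m)
  · have : IsIso (𝟙 E - q ≫ t) := (isUnit_iff_isIso _).mp hu
    obtain ⟨g, hg⟩ : ∃ g, π ≫ g = 𝟙 E - q ≫ t :=
      ⟨cokernel.desc κ _ (by simp [Preadditive.comp_sub, hκ]), cokernel.π_desc _ _ _⟩
    have : Mono π := mono_of_mono_fac (f := g ≫ inv (𝟙 E - q ≫ t)) (h := 𝟙 E)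
      (by rw [reassoc_of% hg, IsIso.hom_inv_id])
    exact .inl (hfac ▸ mono_comp π m)

theorem exists_eq_algebraMap_of_ext1IsZero (hhered : Hereditary (A := A)) {X : A}
    [FiniteDimensional k (X ⟶ X)] (hX : Indecomposable X) (hXX : Ext1IsZero X X) (w : End X) :
    ∃ c : k, w = algebraMap k (End X) c := by
  obtain ⟨c, hc⟩ := hX.exists_isNilpotent_sub_algebraMap k w
  refine ⟨c, sub_eq_zero.mp (by_contra fun h => ?_)⟩
  rcases mono_or_epi_of_ext1IsZero k hhered hX hX hXX h with _ | _
  · exact h (End.eq_zero_of_isNilpotent_of_mono hc)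
  · exact h (End.eq_zero_of_isNilpotent_of_epi hc)

theorem finrank_end_eq_one_of_ext1IsZero (hhered : Hereditary (A := A)) {X : A}
    [FiniteDimensional k (X ⟶ X)] (hX : Indecomposable X) (hXX : Ext1IsZero X X) :
    Module.finrank k (X ⟶ X) = 1 :=
  finrank_eq_one (𝟙 X) (fun h => hX.1 ((IsZero.iff_id_eq_zero X).mpr h)) fun w =>
    (exists_eq_algebraMap_of_ext1IsZero k hhered hX hXX w).imp fun c hc =>
      (Algebra.algebraMap_eq_smul_one c).symm.trans hc.symm

/-- Happel–Ringel Lemma.  Let `A` be a Hom-finite hereditary abelian category over an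
algebraically closed field `k`, and let `E`, `F` be indecomposable objects with
`Ext¹(F, E) = 0`.  Then every nonzero morphism `f : E ⟶ F` is a monomorphism or an
epimorphism.  In particular, every indecomposable object without self-extensions is
exceptional (its endomorphism algebra is `k`, and it has no self-extensions). -/
theorem happel_ringel
    [∀ X Y : A, FiniteDimensional k (X ⟶ Y)]
    (hhered : Hereditary (A := A))
    (E F : A) (hE : Indecomposable E) (hF : Indecomposable F)
    (hext : Ext1IsZero F E) :
    (∀ f : E ⟶ F, f ≠ 0 → Mono f ∨ Epi f) ∧
    (∀ X : A, Indecomposable X → Ext1IsZero X X → Module.finrank k (X ⟶ X) = 1) :=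
  ⟨fun _ hf => mono_or_epi_of_ext1IsZero k hhered hE hF hext hf,
    fun _ hX hXX => finrank_end_eq_one_of_ext1IsZero k hhered hX hXX⟩
end

section
/- Let A_t be the category of finite-dimensional nilpotent representations of a cyclic quiver with t vertices, and let C ⊆ A_t be a full subcategory closed under extensions and direct summands. If there is a sequence (X₀, X₁, ..., X_{n-1}, X_n = X₀) of indecomposable objects with Ext¹(X_i, X_{i-1}) ≠ 0 for 1 ≤ i ≤ n, all belonging to C, then C contains a non-exceptional indecomposable object. -/
open CategoryTheory CategoryTheory.Limits

universe v u

variable (k : Type*) [Field k]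

/-- The `n`-fold composition of an endofunctor. -/
def fpow {A : Type u} [Category.{v} A] (F : A ⥤ A) : ℕ → A ⥤ A
  | 0 => 𝟭 A
  | n + 1 => fpow F n ⋙ F

/-- Data exhibiting an abelian category `A` as `A_t = nilp kÃ_{t-1}`, the category of
finite-dimensional nilpotent representations of the cyclic quiver with `t` vertices over a
field `k`: a Hom-finite uniserial length `k`-category equipped with an autoequivalence `τ`
of period `t` realizing Serre duality `Ext¹(X, Y) ≅ D Hom(Y, τ X)` (in the form of
simultaneous vanishing), and whose simple objects form a single `τ`-orbit of size `t`. -/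
structure NilpTubeData (t : ℕ) (A : Type u) [Category.{v} A] [Abelian A] [Linear k A] where
  homFinite : ∀ X Y : A, FiniteDimensional k (X ⟶ Y)
  finiteLength : ∀ X : A, WellFoundedGT (Subobject X) ∧ WellFoundedLT (Subobject X)
  uniserial : ∀ X : A, Indecomposable X → ∀ a b : Subobject X, a ≤ b ∨ b ≤ a
  tau : A ≌ A
  serre : ∀ X Y : A, Ext1IsZero (A := A) X Y ↔ ∀ f : Y ⟶ tau.functor.obj X, f = 0
  tau_period : Nonempty (fpow tau.functor t ≅ 𝟭 A)
  S₀ : A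
  simple_S₀ : Simple S₀
  simples_orbit : ∀ S : A, Simple S → ∃ i : Fin t, Nonempty (S ≅ (fpow tau.functor i).obj S₀)
  orbit_distinct : ∀ i j : Fin t,
    Nonempty ((fpow tau.functor i).obj S₀ ≅ (fpow tau.functor j).obj S₀) → i = j

variable {A : Type u} [Category.{v} A] [Abelian A] [Linear k A]

/-!
A nonzero class in `Ext¹(X_i, X_{i-1})` is a non-split extension `0 → X_{i-1} → M → X_i → 0`,
and `M ∈ C`. Because `X_{i-1}` and `X_i` are uniserial, splitting off direct summands of `M`
one at a time keeps a summand into which `X_{i-1}` still embeds and which still maps onto `X_i`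
(if these two properties ever landed on different summands, the sequence would split); by
Hom-finiteness this ends at an indecomposable summand `Z ∈ C` with `X_{i-1} ↪ Z ↠ X_i`.
By Serre duality `Ext¹(-, W) ≠ 0` survives passing to a larger object and `Ext¹(W, -) ≠ 0` to a
cover, so `Z` inherits the incoming Ext-arrows of `X_{i-1}` and the outgoing ones of `X_i`, and
merging the two vertices shortens the cycle. A cycle of length one is the required `Z` with
`Ext¹(Z, Z) ≠ 0`.
-/

open Relation

theorem exists_rel_self_of_transGen_self {α : Type*} {r : α → α → Prop}
    (merge : ∀ x y, r x y → ∃ z, (∀ w, r w x → r w z) ∧ ∀ w, r y w → r z w)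
    {a : α} (h : TransGen r a a) : ∃ z, r z z := by
  -- `z` is the endpoint `b` after merges: it receives every arrow into `b` and closes the cycle.
  have key : ∀ {b}, TransGen r a b → ∀ z, (∀ w, r w b → r w z) → r z a → ∃ l, r l l := by
    intro b hab
    induction hab with
    | single hab =>
      intro z hz hza
      obtain ⟨y, hy_in, hy_out⟩ := merge a z (hz a hab)
      exact ⟨y, hy_in y (hy_out a hza)⟩
    | tail _ hbc ih =>
      intro z hz hza
      obtain ⟨y, hy_in, hy_out⟩ := merge _ z (hz _ hbc)
      exact ih y hy_in (hy_out a hza)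
  cases h with
  | single haa => exact ⟨a, haa⟩
  | tail hab hba => exact key hab _ (fun _ => id) hba

theorem finrank_end_lt_finrank_end_biprod (hfin : ∀ X : A, FiniteDimensional k (X ⟶ X))
    {Y Z : A} (hZ : ¬IsZero Z) :
    Module.finrank k (Y ⟶ Y) < Module.finrank k (Y ⊞ Z ⟶ Y ⊞ Z) := by
  let Φ : ((Y ⟶ Y) × (Z ⟶ Z)) →ₗ[k] (Y ⊞ Z ⟶ Y ⊞ Z) :=
    { toFun := fun fg => biprod.map fg.1 fg.2
      map_add' := fun _ _ => by ext <;> simp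
      map_smul' := fun _ _ => by ext <;> simp }
  have hΦ : Function.Injective Φ := fun fg fg' h => by
    have h₁ := congrArg (fun u => biprod.inl ≫ u ≫ biprod.fst) h
    have h₂ := congrArg (fun u => biprod.inr ≫ u ≫ biprod.snd) h
    simp only [Φ, LinearMap.coe_mk, AddHom.coe_mk, biprod.inl_map_assoc, biprod.inl_fst,
      biprod.inr_map_assoc, biprod.inr_snd, Category.comp_id] at h₁ h₂
    exact Prod.ext h₁ h₂
  have : Nontrivial (Z ⟶ Z) := ⟨𝟙 Z, 0, fun h => hZ ((IsZero.iff_id_eq_zero Z).mpr h)⟩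
  have hle := LinearMap.finrank_le_finrank_of_injective hΦ
  rw [Module.finrank_prod] at hle
  have := Module.finrank_pos (R := k) (M := Z ⟶ Z)
  omega

theorem exists_indecomposable_of_biprod_decomposition
    (hfin : ∀ X : A, FiniteDimensional k (X ⟶ X)) (P : A → Prop)
    (hzero : ∀ X, P X → ¬IsZero X) (hsplit : ∀ X Y Z, P X → (X ≅ Y ⊞ Z) → P Y ∨ P Z)
    {X : A} (hX : P X) : ∃ Y, P Y ∧ Indecomposable Y := by
  induction hrank : Module.finrank k (X ⟶ X) using Nat.strong_induction_on generalizing X with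
  | _ N ih =>
  by_cases hind : Indecomposable X
  · exact ⟨X, hX, hind⟩
  obtain ⟨Y, Z, e, hY, hZ⟩ : ∃ (Y Z : A) (_ : X ≅ Y ⊞ Z), ¬IsZero Y ∧ ¬IsZero Z := by
    by_contra! h
    exact hind ⟨hzero X hX, fun Y Z e => or_iff_not_imp_left.mpr (h Y Z e)⟩
  have hlt : ∀ {Y Z : A}, (X ≅ Y ⊞ Z) → ¬IsZero Z → Module.finrank k (Y ⟶ Y) < N :=
    fun e hZ => hrank ▸ (Linear.homCongr k e e).finrank_eq ▸
      finrank_end_lt_finrank_end_biprod k hfin hZ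
  rcases hsplit X Y Z hX e with hPY | hPZ
  · exact ih _ (hlt e hZ) hPY rfl
  · exact ih _ (hlt (e ≪≫ biprod.braiding Y Z) hY) hPZ rfl

theorem mono_or_mono_of_jointly_mono {X Y₁ Y₂ : A} (htot : ∀ a b : Subobject X, a ≤ b ∨ b ≤ a)
    (f₁ : X ⟶ Y₁) (f₂ : X ⟶ Y₂)
    (hjoint : ∀ {T : A} (g : T ⟶ X), g ≫ f₁ = 0 → g ≫ f₂ = 0 → g = 0) :
    Mono f₁ ∨ Mono f₂ := by
  have key : ∀ {Y₁ Y₂ : A} (f₁ : X ⟶ Y₁) (f₂ : X ⟶ Y₂),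
      (∀ {T : A} (g : T ⟶ X), g ≫ f₁ = 0 → g ≫ f₂ = 0 → g = 0) →
      kernelSubobject f₁ ≤ kernelSubobject f₂ → Mono f₁ := by
    intro Y₁ Y₂ f₁ f₂ hjoint hle
    have harrow : (kernelSubobject f₁).arrow = 0 := hjoint _ (kernelSubobject_arrow_comp f₁)
      (by rw [← Subobject.ofLE_arrow hle, Category.assoc, kernelSubobject_arrow_comp, comp_zero])
    refine Preadditive.mono_of_cancel_zero _ fun g hg => ?_
    rw [← factorThruKernelSubobject_comp_arrow f₁ g hg, harrow, comp_zero]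
  rcases htot (kernelSubobject f₁) (kernelSubobject f₂) with hle | hle
  · exact .inl (key f₁ f₂ hjoint hle)
  · exact .inr (key f₂ f₁ (fun g h₂ h₁ => hjoint g h₁ h₂) hle)

open Opposite in
theorem epi_or_epi_of_jointly_epi {X₁ X₂ Y : A} (htot : ∀ a b : Subobject Y, a ≤ b ∨ b ≤ a)
    (g₁ : X₁ ⟶ Y) (g₂ : X₂ ⟶ Y)
    (hjoint : ∀ {T : A} (h : Y ⟶ T), g₁ ≫ h = 0 → g₂ ≫ h = 0 → h = 0) :
    Epi g₁ ∨ Epi g₂ := by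
  have htot_op : ∀ a b : Subobject (op Y), a ≤ b ∨ b ≤ a := fun a b => by
    let e := Abelian.subobjectIsoSubobjectOp Y
    rcases htot (e.symm (OrderDual.toDual a)) (e.symm (OrderDual.toDual b)) with h | h
    · exact .inr (by simpa using e.symm.le_iff_le.mp h)
    · exact .inl (by simpa using e.symm.le_iff_le.mp h)
  have hjoint_op : ∀ {T : Aᵒᵖ} (h : T ⟶ op Y), h ≫ g₁.op = 0 → h ≫ g₂.op = 0 → h = 0 :=
    fun h h₁ h₂ => Quiver.Hom.unop_inj (hjoint h.unop (Quiver.Hom.op_inj h₁) (Quiver.Hom.op_inj h₂))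
  rcases mono_or_mono_of_jointly_mono htot_op g₁.op g₂.op hjoint_op with h | h
  · exact .inl (unop_epi_of_mono g₁.op)
  · exact .inr (unop_epi_of_mono g₂.op)

namespace CategoryTheory.ShortComplex

variable {S : ShortComplex A}

def MonoEpiRetract (S : ShortComplex A) (W : A) : Prop :=
  ∃ R : Retract W S.X₂, Mono (S.f ≫ R.r) ∧ Epi (R.i ≫ S.g)

theorem ShortExact.isSplitMono_f_of_orthogonal (hS : S.ShortExact) {W₁ W₂ : A}
    (ι : W₂ ⟶ S.X₂) (π : S.X₂ ⟶ W₁) [Mono ι] (hιπ : ι ≫ π = 0)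
    (hπ : Mono (S.f ≫ π)) (hι : Epi (ι ≫ S.g)) : IsSplitMono S.f := by
  have := hS.mono_f
  -- A morphism killed by `ι ≫ S.g` factors through `S.f`, and `π` then kills it.
  have : Mono (ι ≫ S.g) := Preadditive.mono_of_cancel_zero _ fun g hg => by
    have hg' : (g ≫ ι) ≫ S.g = 0 := by simpa using hg
    have hlift : hS.exact.lift (g ≫ ι) hg' = 0 := zero_of_comp_mono (S.f ≫ π) (by
      rw [← Category.assoc, hS.exact.lift_f, Category.assoc, hιπ, comp_zero])
    exact zero_of_comp_mono ι (by rw [← hS.exact.lift_f _ hg', hlift, zero_comp])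
  have := isIso_of_mono_of_epi (ι ≫ S.g)
  exact (Splitting.ofExactOfSection S hS.exact (inv (ι ≫ S.g) ≫ ι) (by simp) hS.mono_f
    ).isSplitMono_f

theorem MonoEpiRetract.of_iso_biprod (hS : S.ShortExact) (hns : ¬IsSplitMono S.f)
    (htot₁ : ∀ a b : Subobject S.X₁, a ≤ b ∨ b ≤ a) (htot₃ : ∀ a b : Subobject S.X₃, a ≤ b ∨ b ≤ a)
    {W W₁ W₂ : A} (hW : S.MonoEpiRetract W) (e : W ≅ W₁ ⊞ W₂) :
    S.MonoEpiRetract W₁ ∨ S.MonoEpiRetract W₂ := by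
  obtain ⟨R, hmono, hepi⟩ := hW
  let R' := (Retract.ofIso e.symm).trans R
  let R₁ : Retract W₁ S.X₂ := (Retract.mk biprod.inl biprod.fst).trans R'
  let R₂ : Retract W₂ S.X₂ := (Retract.mk biprod.inr biprod.snd).trans R'
  have hmono' : Mono (S.f ≫ R'.r) := by
    simpa [R', Retract.ofIso] using (inferInstance : Mono ((S.f ≫ R.r) ≫ e.hom))
  have hepi' : Epi (R'.i ≫ S.g) := by
    simpa [R', Retract.ofIso] using (inferInstance : Epi (e.inv ≫ R.i ≫ S.g))
  have hmono₁₂ : Mono (S.f ≫ R₁.r) ∨ Mono (S.f ≫ R₂.r) := by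
    refine mono_or_mono_of_jointly_mono htot₁ _ _ fun g h₁ h₂ => zero_of_comp_mono (S.f ≫ R'.r) ?_
    ext
    · simpa [R₁] using h₁
    · simpa [R₂] using h₂
  have hepi₁₂ : Epi (R₁.i ≫ S.g) ∨ Epi (R₂.i ≫ S.g) := by
    refine epi_or_epi_of_jointly_epi htot₃ _ _ fun h h₁ h₂ => zero_of_epi_comp (R'.i ≫ S.g) ?_
    ext
    · simpa [R₁] using h₁
    · simpa [R₂] using h₂
  rcases hmono₁₂ with h₁ | h₂ <;> rcases hepi₁₂ with h₁' | h₂'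
  · exact .inl ⟨R₁, h₁, h₁'⟩
  · exact absurd (hS.isSplitMono_f_of_orthogonal R₂.i R₁.r (by simp [R₁, R₂]) h₁ h₂') hns
  · exact absurd (hS.isSplitMono_f_of_orthogonal R₁.i R₂.r (by simp [R₁, R₂]) h₂ h₁') hns
  · exact .inr ⟨R₂, h₂, h₂'⟩

theorem exists_indecomposable_monoEpiRetract (hfin : ∀ X : A, FiniteDimensional k (X ⟶ X))
    (hS : S.ShortExact) (hns : ¬IsSplitMono S.f)
    (htot₁ : ∀ a b : Subobject S.X₁, a ≤ b ∨ b ≤ a)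
    (htot₃ : ∀ a b : Subobject S.X₃, a ≤ b ∨ b ≤ a) :
    ∃ W, S.MonoEpiRetract W ∧ Indecomposable W := by
  refine exists_indecomposable_of_biprod_decomposition k hfin _ ?_
    (fun _ _ _ hW e => hW.of_iso_biprod hS hns htot₁ htot₃ e)
    ⟨Retract.refl _, by simpa using hS.mono_f, by simpa using hS.epi_g⟩
  rintro W ⟨R, hmono, -⟩ hW
  exact hns ⟨⟨0, (hW.of_mono (S.f ≫ R.r)).eq_of_src _ _⟩⟩

end CategoryTheory.ShortComplex

structure ExtArrow (C : A → Prop) (X Y : A) : Prop where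
  source_mem : C X
  source_indecomposable : Indecomposable X
  target_mem : C Y
  target_indecomposable : Indecomposable Y
  ext_ne_zero : ¬Ext1IsZero Y X

namespace NilpTubeData

variable {k} {t : ℕ}

theorem not_ext1IsZero_of_mono (ND : NilpTubeData k t A) {X X' Y : A} (m : X ⟶ X') [Mono m]
    (h : ¬Ext1IsZero X Y) :
    ¬Ext1IsZero X' Y := by
  rw [ND.serre] at h ⊢
  push Not at h ⊢
  obtain ⟨f, hf⟩ := h
  exact ⟨f ≫ ND.tau.functor.map m, fun h0 => hf (zero_of_comp_mono _ h0)⟩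

theorem not_ext1IsZero_of_epi (ND : NilpTubeData k t A) {X Y Y' : A} (q : Y' ⟶ Y) [Epi q]
    (h : ¬Ext1IsZero X Y) :
    ¬Ext1IsZero X Y' := by
  rw [ND.serre] at h ⊢
  push Not at h ⊢
  obtain ⟨f, hf⟩ := h
  exact ⟨q ≫ f, fun h0 => hf (zero_of_epi_comp q h0)⟩

theorem exists_extArrow_merge (ND : NilpTubeData k t A) {C : A → Prop}
    (hExt : ∀ (X Y Z : A) (i : X ⟶ Y) (p : Y ⟶ Z) (w : i ≫ p = 0), Mono i → Epi p →
      (ShortComplex.mk i p w).Exact → C X → C Z → C Y)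
    (hSummand : ∀ X Y : A, (∃ (s : X ⟶ Y) (r : Y ⟶ X), s ≫ r = 𝟙 X) → C Y → C X)
    {X Y : A} (h : ExtArrow C X Y) :
    ∃ Z, (∀ W, ExtArrow C W X → ExtArrow C W Z) ∧ ∀ W, ExtArrow C Y W → ExtArrow C Z W := by
  have hne := h.ext_ne_zero
  unfold Ext1IsZero at hne
  push Not at hne
  obtain ⟨M, i, p, w, hi, hp, hex, hns⟩ := hne
  obtain ⟨Z, ⟨R, hmono, hepi⟩, hZ⟩ := (ShortComplex.mk i p w).exists_indecomposable_monoEpiRetract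
    k (fun X => ND.homFinite X X) ⟨hex⟩ (fun ⟨⟨s⟩⟩ => hns s.retraction s.id)
    (ND.uniserial _ h.source_indecomposable) (ND.uniserial _ h.target_indecomposable)
  have hCZ : C Z := hSummand Z M ⟨R.i, R.r, R.retract⟩
    (hExt _ _ _ i p w hi hp hex h.source_mem h.target_mem)
  refine ⟨Z, fun W hW => ⟨hW.source_mem, hW.source_indecomposable, hCZ, hZ, ?_⟩,
    fun W hW => ⟨hCZ, hZ, hW.target_mem, hW.target_indecomposable, ?_⟩⟩
  · exact ND.not_ext1IsZero_of_mono (i ≫ R.r) hW.ext_ne_zero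
  · exact ND.not_ext1IsZero_of_epi (R.i ≫ p) hW.ext_ne_zero

end NilpTubeData

theorem nonexceptional_of_ext_cycle
    (t : ℕ) (ND : NilpTubeData k t A)
    (C : A → Prop)
    (hExt : ∀ (X Y Z : A) (i : X ⟶ Y) (p : Y ⟶ Z) (w : i ≫ p = 0), Mono i → Epi p →
      (ShortComplex.mk i p w).Exact → C X → C Z → C Y)
    (hSummand : ∀ X Y : A, (∃ (s : X ⟶ Y) (r : Y ⟶ X), s ≫ r = 𝟙 X) → C Y → C X)
    (n : ℕ) (hn : 0 < n) (X : Fin (n + 1) → A)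
    (hcycle : Nonempty (X (Fin.last n) ≅ X 0))
    (hind : ∀ i, Indecomposable (X i))
    (hC : ∀ i, C (X i))
    (hext : ∀ i : Fin n, ¬ Ext1IsZero (A := A) (X i.succ) (X i.castSucc)) :
    ∃ Y : A, C Y ∧ Indecomposable Y ∧ ¬ Ext1IsZero (A := A) Y Y := by
  obtain ⟨e⟩ := hcycle
  have hpath : ∀ i, ReflTransGen (ExtArrow C) (X 0) (X i) :=
    Fin.induction .refl fun i h => h.tail ⟨hC _, hind _, hC _, hind _, hext i⟩
  obtain ⟨m, rfl⟩ := Nat.exists_eq_add_one_of_ne_zero hn.ne'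
  have hclose : ExtArrow C (X (Fin.last m).castSucc) (X 0) :=
    ⟨hC _, hind _, hC 0, hind 0, ND.not_ext1IsZero_of_mono e.hom (hext (Fin.last m))⟩
  obtain ⟨Y, hY⟩ := exists_rel_self_of_transGen_self
    (fun _ _ => ND.exists_extArrow_merge hExt hSummand) (TransGen.tail' (hpath _) hclose)
  exact ⟨Y, hY.source_mem, hY.source_indecomposable, hY.ext_ne_zero⟩
end
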